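/- arXiv:2212.10959 — 7 statements merged into one kernel-verified Lean document; each statement's English description precedes it below -/
import Mathlib

section
/- Under causal consistency (A1) and conditional exchangeability (A2), for every treatment value a ∈ α the conditional expectation of the observed outcome times the treatment indicator factorizes as E[Y·1_{A=a} | m] = E[Y_pot(a) | m] · P(A = a | m), μ-almost everywhere. (This is the key identification step in the proof of Lemma 1.) -/
open MeasureTheory ProbabilityTheory Set

/-! Conditional independence given `m` gives the product rule for each pair of events under the
conditional-expectation kernel `κ ω`, for `ω` off a null set depending on the pair. The rational half-lines `Iic q` form a
countable generating π-system of the Borel sets, so a single null set serves all of them, and off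
it `Y_pot(a)` is independent of `1_{A=a}` under `κ ω`. Integrating against `κ ω` turns the
conditional expectations into ordinary expectations, where independence factorizes the integral;
consistency replaces `Y` by `Y_pot(a)` on `{A = a}`. -/

section IndepIndicator

variable {Ω : Type*} {mΩ : MeasurableSpace Ω} {ν : Measure Ω} [IsProbabilityMeasure ν]
  {f : Ω → ℝ} {s : Set Ω}

lemma indepFun_indicator_of_measure_preimage_Iic_inter (hf : Measurable f) (hs : MeasurableSet s)
    (h : ∀ q : ℚ, ν (f ⁻¹' Iic (q : ℝ) ∩ s) = ν (f ⁻¹' Iic (q : ℝ)) * ν s) :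
    IndepFun f (s.indicator fun _ => (1 : ℝ)) ν := by
  have h_gen : MeasurableSpace.comap f inferInstance
      = MeasurableSpace.generateFrom ((f ⁻¹' ·) '' ⋃ q : ℚ, {Iic (q : ℝ)}) := by
    rw [BorelSpace.measurable_eq (α := ℝ), Real.borel_eq_generateFrom_Iic_rat,
      MeasurableSpace.comap_generateFrom]
  have h_sets : IndepSets ((f ⁻¹' ·) '' ⋃ q : ℚ, {Iic (q : ℝ)}) {s} ν := by
    rintro _ _ ⟨_, hq, rfl⟩ rfl
    obtain ⟨q, rfl⟩ : ∃ q : ℚ, Iic (q : ℝ) = _ := by simpa using hq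
    exact .of_forall fun _ => h q
  have h_indep : Indep (MeasurableSpace.comap f inferInstance)
      (MeasurableSpace.generateFrom {s}) ν :=
    h_sets.indep hf.comap_le (MeasurableSpace.generateFrom_le (by simpa using hs))
      (Real.isPiSystem_Iic_rat.comap f) (IsPiSystem.singleton s) h_gen rfl
  have h_meas : Measurable[MeasurableSpace.generateFrom {s}] (s.indicator fun _ => (1 : ℝ)) :=
    measurable_const.indicator (MeasurableSpace.measurableSet_generateFrom (mem_singleton s))
  exact indep_of_indep_of_le_right h_indep h_meas.comap_le

lemma integral_mul_indicator_of_measure_preimage_Iic_inter (hf : Measurable f)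
    (hs : MeasurableSet s)
    (h : ∀ q : ℚ, ν (f ⁻¹' Iic (q : ℝ) ∩ s) = ν (f ⁻¹' Iic (q : ℝ)) * ν s) :
    ∫ x, f x * s.indicator (fun _ => (1 : ℝ)) x ∂ν = (∫ x, f x ∂ν) * ν.real s := by
  rw [(indepFun_indicator_of_measure_preimage_Iic_inter hf hs h).integral_fun_mul_eq_mul_integral
    hf.aestronglyMeasurable (measurable_const.indicator hs).aestronglyMeasurable]
  exact congrArg _ (integral_indicator_one hs)

end IndepIndicator

theorem ProbabilityTheory.CondIndepFun.condExp_mul_indicator_preimage {Ω β : Type*}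
    {m mΩ : MeasurableSpace Ω} [StandardBorelSpace Ω] {μ : Measure Ω} [IsFiniteMeasure μ]
    {hm : m ≤ mΩ} [MeasurableSpace β] {f : Ω → ℝ} {g : Ω → β} (h : CondIndepFun m hm f g μ)
    (hf : Measurable f) (hf_int : Integrable f μ) (hg : Measurable g) {t : Set β}
    (ht : MeasurableSet t) :
    μ[fun ω => f ω * (g ⁻¹' t).indicator (fun _ => (1 : ℝ)) ω | m]
      =ᵐ[μ] fun ω => (μ[f | m]) ω * (μ⟦g ⁻¹' t | m⟧) ω := by
  have hs : MeasurableSet (g ⁻¹' t) := hg ht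
  have h_kernel : ∀ᵐ ω ∂μ, ∀ q : ℚ, condExpKernel μ m ω (f ⁻¹' Iic (q : ℝ) ∩ g ⁻¹' t)
      = condExpKernel μ m ω (f ⁻¹' Iic (q : ℝ)) * condExpKernel μ m ω (g ⁻¹' t) :=
    ae_of_ae_trim hm <| ae_all_iff.2 fun q =>
      h _ _ ⟨Iic (q : ℝ), measurableSet_Iic, rfl⟩ ⟨t, ht, rfl⟩
  have h_prod_int :
      Integrable (fun ω => f ω * (g ⁻¹' t).indicator (fun _ => (1 : ℝ)) ω) μ := by
    refine (hf_int.indicator hs).congr (.of_forall fun ω => ?_)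
    by_cases hω : ω ∈ g ⁻¹' t <;> simp [hω]
  filter_upwards [condExp_ae_eq_integral_condExpKernel hm h_prod_int,
    condExp_ae_eq_integral_condExpKernel hm hf_int, condExpKernel_ae_eq_condExp hm hs, h_kernel]
    with ω h_prod h_f h_ind h_ω
  rw [h_prod, h_f, ← h_ind]
  exact integral_mul_indicator_of_measure_preimage_Iic_inter hf hs h_ω

theorem stmt0_general {Ω : Type*} {mΩ : MeasurableSpace Ω} [StandardBorelSpace Ω]
    (μ : Measure Ω) [IsProbabilityMeasure μ]
    (m : MeasurableSpace Ω) (hm : m ≤ mΩ)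
    {α : Type*} [DecidableEq α] [MeasurableSpace α] [MeasurableSingletonClass α]
    (A : Ω → α) (hA : Measurable[mΩ] A)
    (Ypot : α → Ω → ℝ) (hYpot_meas : ∀ a, Measurable[mΩ] (Ypot a))
    (C : ℝ) (hYpot_bdd : ∀ a ω, |Ypot a ω| ≤ C)
    (Y : Ω → ℝ)
    (hA1 : ∀ᵐ ω ∂μ, Y ω = Ypot (A ω) ω)
    (hA2 : ∀ a : α, CondIndepFun m hm (Ypot a) A μ) :
    ∀ a : α,
      (μ[fun ω => Y ω * (if A ω = a then (1:ℝ) else 0)|m])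
        =ᵐ[μ]
      fun ω => (μ[Ypot a|m]) ω * (μ[fun ω' => (if A ω' = a then (1:ℝ) else 0)|m]) ω := by
  intro a
  have h_ind :
      (fun ω => if A ω = a then (1 : ℝ) else 0) = (A ⁻¹' {a}).indicator fun _ => (1 : ℝ) := by
    ext ω
    by_cases hω_a : A ω = a <;> simp [hω_a]
  have h_int : Integrable (Ypot a) μ :=
    Integrable.of_bound (hYpot_meas a).aestronglyMeasurable C
      (.of_forall fun ω => (Real.norm_eq_abs _).trans_le (hYpot_bdd a ω))
  have h_consistency : (fun ω => Y ω * if A ω = a then (1 : ℝ) else 0)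
      =ᵐ[μ] fun ω => Ypot a ω * (A ⁻¹' {a}).indicator (fun _ => (1 : ℝ)) ω := by
    filter_upwards [hA1] with ω hω
    by_cases hω_a : A ω = a <;> simp [hω, hω_a]
  rw [h_ind]
  exact (condExp_congr_ae h_consistency).trans <|
    (hA2 a).condExp_mul_indicator_preimage (hYpot_meas a) h_int hA (measurableSet_singleton a)

/-- (Key identification step in the proof of Lemma 1.)
Under causal consistency (A1) and conditional exchangeability (A2), for every
treatment value `a`, the conditional expectation of the observed outcome times
the treatment indicator factorizes as
`E[Y·1_{A=a} | m] = E[Y_pot(a) | m] · P(A = a | m)`, `μ`-almost everywhere. -/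
theorem stmt0 {Ω : Type*} {mΩ : MeasurableSpace Ω} [StandardBorelSpace Ω] [Nonempty Ω]
    (μ : Measure Ω) [IsProbabilityMeasure μ]
    (m : MeasurableSpace Ω) (hm : m ≤ mΩ)
    {α : Type*} [Fintype α] [DecidableEq α] [MeasurableSpace α] [MeasurableSingletonClass α]
    (A : Ω → α) (hA : Measurable[mΩ] A)
    (Ypot : α → Ω → ℝ) (hYpot_meas : ∀ a, Measurable[mΩ] (Ypot a))
    (C : ℝ) (hYpot_bdd : ∀ a ω, |Ypot a ω| ≤ C)
    (Y : Ω → ℝ)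
    (hA1 : ∀ᵐ ω ∂μ, Y ω = Ypot (A ω) ω)
    (hA2 : ∀ a : α, CondIndepFun m hm (Ypot a) A μ) :
    ∀ a : α,
      (μ[fun ω => Y ω * (if A ω = a then (1:ℝ) else 0)|m])
        =ᵐ[μ]
      fun ω => (μ[Ypot a|m]) ω * (μ[fun ω' => (if A ω' = a then (1:ℝ) else 0)|m]) ω :=
  stmt0_general μ m hm A hA Ypot hYpot_meas C hYpot_bdd Y hA1 hA2
end

section
/- (Lemma 1, identifiability.) Under causal consistency (A1), conditional exchangeability (A2), and positivity (A3), for any bounded m-measurable weight functions w(a) : Ω → ℝ (a ∈ α), the counterfactual functional is identified from the observed-data distribution: E[∑_{a∈α} w(a)·Y_pot(a)] = E[∑_{a∈α} w(a) · E[Y·1_{A=a} | m] / P(A = a | m)]. -/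
open MeasureTheory ProbabilityTheory

/-!
Conditional independence of `Y(a)` and `A` given `m` means that, for a.e. `ω`, `Y(a)` and `A` are
independent under the conditional-expectation kernel at `ω`; integrating against that kernel gives
`E[Y(a)·1_{A=a} | m] = E[Y(a) | m] · P(A = a | m)`. By consistency the left side is
`E[Y·1_{A=a} | m]`, and positivity lets us divide, so each inverse-propensity term is a.e.
`w(a)·E[Y(a) | m]`. Since `w(a)` is bounded and `m`-measurable, it can be pulled into the
conditional expectation, and taking expectations gives `E[w(a)·Y(a)]`.
-/

namespace MeasureTheory

theorem integral_mul_condExp_of_stronglyMeasurable {Ω : Type*}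
    {m mΩ : MeasurableSpace Ω} {μ : Measure Ω} [IsFiniteMeasure μ] (hm : m ≤ mΩ) {w X : Ω → ℝ}
    (hw : StronglyMeasurable[m] w) {Cw : ℝ} (hw_bdd : ∀ᵐ ω ∂μ, ‖w ω‖ ≤ Cw)
    (hX : Integrable X μ) :
    ∫ ω, w ω * μ[X|m] ω ∂μ = ∫ ω, w ω * X ω ∂μ := by
  calc ∫ ω, w ω * μ[X|m] ω ∂μ = ∫ ω, μ[w * X|m] ω ∂μ :=
        integral_congr_ae (condExp_stronglyMeasurable_mul_of_bound hm hw hX Cw hw_bdd).symm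
    _ = ∫ ω, w ω * X ω ∂μ := integral_condExp hm

end MeasureTheory

namespace ProbabilityTheory

variable {Ω : Type*} {m mΩ : MeasurableSpace Ω} [StandardBorelSpace Ω] {hm : m ≤ mΩ}
  {μ : Measure Ω} [IsFiniteMeasure μ]

theorem CondIndepFun.ae_indepFun_condExpKernel {β β' : Type*} [MeasurableSpace β]
    [MeasurableSpace β'] [MeasurableSpace.CountableOrCountablyGenerated Ω (β × β')]
    {f : Ω → β} {g : Ω → β'} (hfg : CondIndepFun m hm f g μ) (hf : Measurable f)
    (hg : Measurable g) :
    ∀ᵐ ω ∂μ, IndepFun f g (condExpKernel μ m ω) := by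
  filter_upwards [ae_of_ae_trim hm ((condIndepFun_iff_map_prod_eq_prod_map_map hf hg).mp hfg)]
    with ω hω
  rw [indepFun_iff_map_prod_eq_prod_map_map hf.aemeasurable hg.aemeasurable]
  simpa only [Kernel.map_apply _ (hf.prodMk hg), Kernel.prod_apply, Kernel.map_apply _ hf,
    Kernel.map_apply _ hg] using hω

theorem CondIndepFun.condExp_mul {f g : Ω → ℝ} (hfg : CondIndepFun m hm f g μ)
    (hf : Measurable f) (hg : Measurable g) (hf_int : Integrable f μ) (hg_int : Integrable g μ)
    (hfg_int : Integrable (f * g) μ) :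
    μ[f * g|m] =ᵐ[μ] μ[f|m] * μ[g|m] := by
  filter_upwards [hfg.ae_indepFun_condExpKernel hf hg,
    condExp_ae_eq_integral_condExpKernel hm hfg_int, condExp_ae_eq_integral_condExpKernel hm hf_int,
    condExp_ae_eq_integral_condExpKernel hm hg_int] with ω hind hω_fg hω_f hω_g
  rw [Pi.mul_apply, hω_fg, hω_f, hω_g]
  exact hind.integral_mul_eq_mul_integral hf.aestronglyMeasurable hg.aestronglyMeasurable

theorem condExp_mul_ite_div_condExp_ite_ae_eq {α : Type*} [MeasurableSpace α]
    [MeasurableSingletonClass α] [DecidableEq α] {A : Ω → α} (hA : Measurable A) (a : α)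
    {Y Ya : Ω → ℝ} (hYa : Measurable Ya) (hYa_int : Integrable Ya μ)
    (hcons : ∀ᵐ ω ∂μ, A ω = a → Y ω = Ya ω) (hind : CondIndepFun m hm Ya A μ)
    (hpos : ∀ᵐ ω ∂μ, μ[fun ω' => if A ω' = a then (1:ℝ) else 0|m] ω ≠ 0) :
    (fun ω => μ[fun ω' => Y ω' * (if A ω' = a then (1:ℝ) else 0)|m] ω /
      μ[fun ω' => if A ω' = a then (1:ℝ) else 0|m] ω) =ᵐ[μ] μ[Ya|m] := by
  set χ : Ω → ℝ := fun ω => if A ω = a then 1 else 0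
  have hite : Measurable fun x : α => if x = a then (1:ℝ) else 0 :=
    measurable_const.ite (measurableSet_singleton a) measurable_const
  have hχ_bdd : ∀ᵐ ω ∂μ, ‖χ ω‖ ≤ 1 :=
    .of_forall fun ω => by by_cases h : A ω = a <;> simp [χ, h]
  have hcons' : (fun ω => Y ω * χ ω) =ᵐ[μ] Ya * χ := by
    filter_upwards [hcons] with ω h
    by_cases hω : A ω = a <;> simp [χ, hω, h]
  have hfac : μ[Ya * χ|m] =ᵐ[μ] μ[Ya|m] * μ[χ|m] :=
    CondIndepFun.condExp_mul (hind.comp measurable_id hite) hYa (hite.comp hA) hYa_int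
      (.of_bound (hite.comp hA).aestronglyMeasurable 1 hχ_bdd)
      (hYa_int.mul_bdd (hite.comp hA).aestronglyMeasurable hχ_bdd)
  filter_upwards [condExp_congr_ae hcons', hfac, hpos] with ω h_cons h_fac h_pos
  rw [h_cons, h_fac, Pi.mul_apply, mul_div_cancel_right₀ _ h_pos]

end ProbabilityTheory

theorem stmt1_general {Ω : Type*} {mΩ : MeasurableSpace Ω} [StandardBorelSpace Ω]
    (μ : Measure Ω) [IsProbabilityMeasure μ]
    (m : MeasurableSpace Ω) (hm : m ≤ mΩ)
    {α : Type*} [Fintype α] [DecidableEq α] [MeasurableSpace α] [MeasurableSingletonClass α]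
    (A : Ω → α) (hA : Measurable[mΩ] A)
    (Ypot : α → Ω → ℝ) (hYpot_meas : ∀ a, Measurable[mΩ] (Ypot a))
    (C : ℝ) (hYpot_bdd : ∀ a ω, |Ypot a ω| ≤ C)
    (Y : Ω → ℝ)
    -- (A1) causal consistency
    (hA1 : ∀ᵐ ω ∂μ, Y ω = Ypot (A ω) ω)
    -- (A2) conditional exchangeability
    (hA2 : ∀ a : α, CondIndepFun m hm (Ypot a) A μ)
    -- (A3) positivity
    (c : ℝ) (hc0 : 0 < c)
    (hA3 : ∀ a : α, ∀ᵐ ω ∂μ,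
      c ≤ (μ[fun ω' => (if A ω' = a then (1:ℝ) else 0)|m]) ω)
    -- bounded m-measurable weight functions
    (w : α → Ω → ℝ) (hw_meas : ∀ a, Measurable[m] (w a))
    (Cw : ℝ) (hw_bdd : ∀ a ω, |w a ω| ≤ Cw) :
    ∫ ω, ∑ a, w a ω * Ypot a ω ∂μ
      = ∫ ω, ∑ a, w a ω *
          ((μ[fun ω' => Y ω' * (if A ω' = a then (1:ℝ) else 0)|m]) ω /
            (μ[fun ω' => (if A ω' = a then (1:ℝ) else 0)|m]) ω) ∂μ := by
  have hYpot_int a : Integrable (Ypot a) μ :=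
    .of_bound (hYpot_meas a).aestronglyMeasurable C (.of_forall fun ω => hYpot_bdd a ω)
  have hw_norm a : ∀ᵐ ω ∂μ, ‖w a ω‖ ≤ Cw := .of_forall fun ω => hw_bdd a ω
  have hw_aesm a : AEStronglyMeasurable[mΩ] (w a) μ :=
    ((hw_meas a).mono hm le_rfl).aestronglyMeasurable
  have harm a := condExp_mul_ite_div_condExp_ite_ae_eq hA a (Y := Y) (hYpot_meas a) (hYpot_int a)
    (by filter_upwards [hA1] with ω h hω; rw [h, hω]) (hA2 a)
    (by filter_upwards [hA3 a] with ω h using (hc0.trans_le h).ne')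
  calc ∫ ω, ∑ a, w a ω * Ypot a ω ∂μ = ∑ a, ∫ ω, w a ω * Ypot a ω ∂μ :=
        integral_finsetSum _ fun a _ => (hYpot_int a).bdd_mul (hw_aesm a) (hw_norm a)
    _ = ∑ a, ∫ ω, w a ω * μ[Ypot a|m] ω ∂μ := by
        congr! 1 with a
        exact (integral_mul_condExp_of_stronglyMeasurable hm (hw_meas a).stronglyMeasurable
          (hw_norm a) (hYpot_int a)).symm
    _ = ∫ ω, ∑ a, w a ω * μ[Ypot a|m] ω ∂μ :=
        (integral_finsetSum _ fun a _ => integrable_condExp.bdd_mul (hw_aesm a) (hw_norm a)).symm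
    _ = _ := by
        refine integral_congr_ae ?_
        filter_upwards [ae_all_iff.mpr harm] with ω hω
        exact Finset.sum_congr rfl fun a _ => congrArg (w a ω * ·) (hω a).symm

/-- (Lemma 1, identifiability.)
Under causal consistency (A1), conditional exchangeability (A2), and
positivity (A3), for any bounded `m`-measurable weight functions `w(a)`, the
counterfactual functional `E[∑_a w(a)·Y_pot(a)]` equals the observed-data
functional `E[∑_a w(a)·E[Y·1_{A=a}|m]/P(A=a|m)]`. -/
theorem stmt1 {Ω : Type*} {mΩ : MeasurableSpace Ω} [StandardBorelSpace Ω] [Nonempty Ω]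
    (μ : Measure Ω) [IsProbabilityMeasure μ]
    (m : MeasurableSpace Ω) (hm : m ≤ mΩ)
    {α : Type*} [Fintype α] [DecidableEq α] [MeasurableSpace α] [MeasurableSingletonClass α]
    (A : Ω → α) (hA : Measurable[mΩ] A)
    (Ypot : α → Ω → ℝ) (hYpot_meas : ∀ a, Measurable[mΩ] (Ypot a))
    (C : ℝ) (hYpot_bdd : ∀ a ω, |Ypot a ω| ≤ C)
    (Y : Ω → ℝ)
    -- (A1) causal consistency
    (hA1 : ∀ᵐ ω ∂μ, Y ω = Ypot (A ω) ω)
    -- (A2) conditional exchangeability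
    (hA2 : ∀ a : α, CondIndepFun m hm (Ypot a) A μ)
    -- (A3) positivity
    (c : ℝ) (hc0 : 0 < c) (hc1 : c < 1)
    (hA3 : ∀ a : α, ∀ᵐ ω ∂μ,
      c ≤ (μ[fun ω' => (if A ω' = a then (1:ℝ) else 0)|m]) ω)
    -- bounded m-measurable weight functions
    (w : α → Ω → ℝ) (hw_meas : ∀ a, Measurable[m] (w a))
    (Cw : ℝ) (hw_bdd : ∀ a ω, |w a ω| ≤ Cw) :
    ∫ ω, ∑ a, w a ω * Ypot a ω ∂μ
      = ∫ ω, ∑ a, w a ω *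
          ((μ[fun ω' => Y ω' * (if A ω' = a then (1:ℝ) else 0)|m]) ω /
            (μ[fun ω' => (if A ω' = a then (1:ℝ) else 0)|m]) ω) ∂μ :=
  stmt1_general μ m hm A hA Ypot hYpot_meas C hYpot_bdd Y hA1 hA2 c hc0 hA3 w hw_meas Cw hw_bdd
end

section
/- (Unbiasedness of the efficient influence function, property (B) in the proof of Theorem 1.) The uncentered efficient influence function has mean equal to the target functional: E[φ_unc] = Ψ(w), where φ_unc := ∑_{a∈α} ⟨w(a) + φ(A, a), G(a)⟩ + ⟨w(A), Y − G(A)⟩ / H(A). Equivalently, the centered influence function φ_unc − Ψ(w) has mean zero. -/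
open MeasureTheory RealInnerProductSpace

/-- Cluster-level treatment probability `H(a) = P(A = a | m) = μ[1_{A=a}|m]`. -/
noncomputable def condH {Ω α : Type*} {mΩ : MeasurableSpace Ω} [DecidableEq α]
    (μ : Measure Ω) (m : MeasurableSpace Ω) (A : Ω → α) (a : α) : Ω → ℝ :=
  μ[fun ω => if A ω = a then (1:ℝ) else 0|m]

/-- Cluster-level outcome regression `G(a) = μ[Y·1_{A=a}|m] / H(a)` (componentwise). -/
noncomputable def condG {Ω α : Type*} {mΩ : MeasurableSpace Ω} [DecidableEq α] {n : ℕ}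
    (μ : Measure Ω) (m : MeasurableSpace Ω) (A : Ω → α)
    (Y : Ω → EuclideanSpace ℝ (Fin n)) (a : α) : Ω → EuclideanSpace ℝ (Fin n) :=
  fun ω => (condH μ m A a ω)⁻¹ •
    (μ[fun ω' => (if A ω' = a then (1:ℝ) else 0) • Y ω'|m]) ω

/-! Since `α` is finite, `⟪φ(A, a), G(a)⟫` and `⟪w(A), Y - G(A)⟫ / H(A)` are sums over `a'` of
inner products of a bounded `m`-measurable function with `1_{A = a'} •` an integrable one.
Such an inner product keeps its mean when the integrable factor is conditioned on `m`, which turns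
`1_{A = a'}` into `H(a')` and `1_{A = a} • Y` into `H(a) • G(a)`. The `φ`-term then has mean
`E ⟪∑ a', H(a') • φ(a', a), G(a)⟫ = 0`, and the residual term vanishes because
`μ[1_{A = a} • (Y - G(a)) | m] = 0`. -/

namespace MeasureTheory

variable {Ω : Type*} {m mΩ : MeasurableSpace Ω} {μ : Measure Ω}

theorem integrable_inner_of_bdd_left {E : Type*} [NormedAddCommGroup E] [InnerProductSpace ℝ E]
    {v f : Ω → E} (hv : AEStronglyMeasurable v μ) {C : ℝ} (hvC : ∀ᵐ ω ∂μ, ‖v ω‖ ≤ C)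
    (hf : Integrable f μ) : Integrable (fun ω => ⟪v ω, f ω⟫) μ :=
  (innerSL ℝ).integrable_of_bilin_of_bdd_left C hv hvC hf

theorem integral_inner_eq_integral_inner_condExp {E : Type*} [NormedAddCommGroup E]
    [InnerProductSpace ℝ E] [CompleteSpace E] (hm : m ≤ mΩ) [IsFiniteMeasure μ] {v f : Ω → E}
    (hv : StronglyMeasurable[m] v) {C : ℝ} (hvC : ∀ᵐ ω ∂μ, ‖v ω‖ ≤ C) (hf : Integrable f μ) :
    ∫ ω, ⟪v ω, f ω⟫ ∂μ = ∫ ω, ⟪v ω, (μ[f|m]) ω⟫ ∂μ := by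
  rw [← integral_condExp hm]
  exact integral_congr_ae (condExp_stronglyMeasurable_bilin_of_bound (innerSL ℝ) hm hv hf C hvC)

end MeasureTheory

section TreatmentIndicator

open Finset

variable {Ω α : Type*} {m mΩ : MeasurableSpace Ω} {μ : Measure Ω} [DecidableEq α] {A : Ω → α}
  {E : Type*} [NormedAddCommGroup E] [InnerProductSpace ℝ E]

def treatIndicator (A : Ω → α) (a : α) (ω : Ω) : ℝ := if A ω = a then 1 else 0

theorem sum_treatIndicator_smul [Fintype α] {F : Type*} [AddCommMonoid F] [Module ℝ F]
    (x : α → F) (ω : Ω) : ∑ a, treatIndicator A a ω • x a = x (A ω) := by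
  simp [treatIndicator, ite_smul]

theorem inner_comp_eq_sum_inner_treatIndicator_smul [Fintype α] (u z : α → Ω → E) (ω : Ω) :
    ⟪u (A ω) ω, z (A ω) ω⟫ = ∑ a, ⟪u a ω, treatIndicator A a ω • z a ω⟫ := by
  simp_rw [real_inner_smul_right, ← smul_eq_mul, sum_treatIndicator_smul]

theorem norm_treatIndicator_le (a : α) (ω : Ω) : ‖treatIndicator A a ω‖ ≤ 1 := by
  unfold treatIndicator; split_ifs <;> simp

variable [MeasurableSpace α] [MeasurableSingletonClass α]

theorem measurable_treatIndicator (hA : Measurable A) (a : α) :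
    Measurable (treatIndicator A a) :=
  Measurable.ite (hA (measurableSet_singleton a)) measurable_const measurable_const

theorem MeasureTheory.Integrable.treatIndicator_smul (hA : Measurable A) (a : α) {f : Ω → E}
    (hf : Integrable f μ) : Integrable (fun ω => treatIndicator A a ω • f ω) μ :=
  hf.bdd_smul 1 (measurable_treatIndicator hA a).aestronglyMeasurable
    (ae_of_all _ (norm_treatIndicator_le a))

theorem integrable_inner_comp [Fintype α] (hA : Measurable A) {u z : α → Ω → E}
    (hu : ∀ a, AEStronglyMeasurable (u a) μ) {C : ℝ} (huC : ∀ a, ∀ᵐ ω ∂μ, ‖u a ω‖ ≤ C)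
    (hz : ∀ a, Integrable (z a) μ) : Integrable (fun ω => ⟪u (A ω) ω, z (A ω) ω⟫) μ := by
  simp_rw [inner_comp_eq_sum_inner_treatIndicator_smul u z]
  exact integrable_finsetSum _ fun a _ =>
    integrable_inner_of_bdd_left (hu a) (huC a) ((hz a).treatIndicator_smul hA a)

theorem integral_inner_comp_eq_sum_condExp [Fintype α] [CompleteSpace E] (hm : m ≤ mΩ)
    [IsFiniteMeasure μ] (hA : Measurable A) {u z : α → Ω → E}
    (hu : ∀ a, StronglyMeasurable[m] (u a)) {C : ℝ} (huC : ∀ a, ∀ᵐ ω ∂μ, ‖u a ω‖ ≤ C)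
    (hz : ∀ a, Integrable (z a) μ) :
    ∫ ω, ⟪u (A ω) ω, z (A ω) ω⟫ ∂μ
      = ∑ a, ∫ ω, ⟪u a ω, (μ[fun ω => treatIndicator A a ω • z a ω|m]) ω⟫ ∂μ := by
  simp_rw [inner_comp_eq_sum_inner_treatIndicator_smul u z]
  rw [integral_finsetSum _ fun a _ => integrable_inner_of_bdd_left
    ((hu a).mono hm).aestronglyMeasurable (huC a) ((hz a).treatIndicator_smul hA a)]
  exact sum_congr rfl fun a _ => integral_inner_eq_integral_inner_condExp hm (hu a) (huC a)
    ((hz a).treatIndicator_smul hA a)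

theorem condExp_treatIndicator_smul [CompleteSpace E] [IsFiniteMeasure μ] (hA : Measurable A)
    (a : α) {g : Ω → E} (hg : StronglyMeasurable[m] g) (hgi : Integrable g μ) :
    μ[fun ω => treatIndicator A a ω • g ω|m] =ᵐ[μ] fun ω => condH μ m A a ω • g ω :=
  condExp_smul_of_aestronglyMeasurable_right
    (.of_bound (measurable_treatIndicator hA a).aestronglyMeasurable 1
      (ae_of_all _ (norm_treatIndicator_le a)))
    (hgi.treatIndicator_smul hA a) hg.aestronglyMeasurable

theorem integral_inner_comp_eq_zero [Fintype α] [CompleteSpace E] (hm : m ≤ mΩ)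
    [IsFiniteMeasure μ] (hA : Measurable A) {u : α → Ω → E}
    (hu : ∀ a, StronglyMeasurable[m] (u a)) {C : ℝ} (huC : ∀ a, ∀ᵐ ω ∂μ, ‖u a ω‖ ≤ C)
    (hu0 : ∀ᵐ ω ∂μ, ∑ a, condH μ m A a ω • u a ω = 0)
    {g : Ω → E} (hg : StronglyMeasurable[m] g) (hgi : Integrable g μ) :
    ∫ ω, ⟪u (A ω) ω, g ω⟫ ∂μ = 0 := by
  have hHg := fun a => condExp_treatIndicator_smul hA a hg hgi
  calc ∫ ω, ⟪u (A ω) ω, g ω⟫ ∂μ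
      = ∑ a, ∫ ω, ⟪u a ω, (μ[fun ω => treatIndicator A a ω • g ω|m]) ω⟫ ∂μ :=
        integral_inner_comp_eq_sum_condExp hm hA hu huC (z := fun _ => g) fun _ => hgi
    _ = ∑ a, ∫ ω, ⟪u a ω, condH μ m A a ω • g ω⟫ ∂μ :=
        sum_congr rfl fun a _ =>
          integral_congr_ae ((hHg a).mono fun ω h => congrArg (⟪u a ω, ·⟫) h)
    _ = ∫ ω, ⟪∑ a, condH μ m A a ω • u a ω, g ω⟫ ∂μ := by
        rw [← integral_finsetSum _ fun a _ => integrable_inner_of_bdd_left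
          ((hu a).mono hm).aestronglyMeasurable (huC a) (integrable_condExp.congr (hHg a))]
        simp_rw [sum_inner, real_inner_smul_left, real_inner_smul_right]
    _ = 0 := by
        rw [integral_congr_ae (hu0.mono fun ω h => congrArg (⟪·, g ω⟫) h)]
        simp

end TreatmentIndicator

section Regression

open Finset

variable {Ω α : Type*} {m mΩ : MeasurableSpace Ω} {μ : Measure Ω} [DecidableEq α] {A : Ω → α}
  {n : ℕ} {Y : Ω → EuclideanSpace ℝ (Fin n)} {c : ℝ}

theorem stronglyMeasurable_inv_condH (a : α) :
    StronglyMeasurable[m] (fun ω => (condH μ m A a ω)⁻¹) :=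
  (stronglyMeasurable_condExp (m := m) (μ := μ)).measurable.inv.stronglyMeasurable

theorem stronglyMeasurable_condG (a : α) : StronglyMeasurable[m] (condG μ m A Y a) :=
  (stronglyMeasurable_inv_condH a).smul stronglyMeasurable_condExp

theorem ae_norm_inv_condH_le (hc : 0 < c) {a : α} (hH : ∀ᵐ ω ∂μ, c ≤ condH μ m A a ω) :
    ∀ᵐ ω ∂μ, ‖(condH μ m A a ω)⁻¹‖ ≤ c⁻¹ := by
  filter_upwards [hH] with ω hω
  rw [norm_inv, Real.norm_of_nonneg (hc.le.trans hω)]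
  exact inv_anti₀ hc hω

theorem ae_norm_inv_condH_smul_le {F : Type*} [NormedAddCommGroup F] [NormedSpace ℝ F]
    (hc : 0 < c) {a : α} (hH : ∀ᵐ ω ∂μ, c ≤ condH μ m A a ω) {w : Ω → F} {C : ℝ}
    (hwC : ∀ ω, ‖w ω‖ ≤ C) : ∀ᵐ ω ∂μ, ‖(condH μ m A a ω)⁻¹ • w ω‖ ≤ c⁻¹ * C := by
  filter_upwards [ae_norm_inv_condH_le hc hH] with ω h
  rw [norm_smul]
  exact mul_le_mul h (hwC ω) (norm_nonneg _) (inv_nonneg.2 hc.le)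

theorem integrable_condG (hm : m ≤ mΩ) (hc : 0 < c) {a : α}
    (hH : ∀ᵐ ω ∂μ, c ≤ condH μ m A a ω) : Integrable (condG μ m A Y a) μ :=
  integrable_condExp.bdd_smul c⁻¹
    ((stronglyMeasurable_inv_condH a).mono hm).aestronglyMeasurable
    (ae_norm_inv_condH_le hc hH)

theorem condH_smul_condG (hc : 0 < c) {a : α} (hH : ∀ᵐ ω ∂μ, c ≤ condH μ m A a ω) :
    (fun ω => condH μ m A a ω • condG μ m A Y a ω)
      =ᵐ[μ] μ[fun ω => treatIndicator A a ω • Y ω|m] := by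
  filter_upwards [hH] with ω hω
  rw [condG, smul_smul, mul_inv_cancel₀ (hc.trans_le hω).ne', one_smul]
  rfl

variable [MeasurableSpace α] [MeasurableSingletonClass α]

theorem condExp_treatIndicator_smul_sub_condG (hm : m ≤ mΩ) [IsFiniteMeasure μ]
    (hA : Measurable A) (hY : Integrable Y μ) (hc : 0 < c) {a : α}
    (hH : ∀ᵐ ω ∂μ, c ≤ condH μ m A a ω) :
    μ[fun ω => treatIndicator A a ω • (Y ω - condG μ m A Y a ω)|m] =ᵐ[μ] 0 := by
  have hG := integrable_condG hm hc hH (Y := Y)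
  have hsplit : (fun ω => treatIndicator A a ω • (Y ω - condG μ m A Y a ω))
      = (fun ω => treatIndicator A a ω • Y ω) - fun ω => treatIndicator A a ω • condG μ m A Y a ω :=
    funext fun ω => smul_sub _ _ _
  rw [hsplit]
  filter_upwards [condExp_sub (hY.treatIndicator_smul hA a) (hG.treatIndicator_smul hA a) m,
    condExp_treatIndicator_smul hA a (stronglyMeasurable_condG a) hG, condH_smul_condG hc hH]
    with ω hsub hpull hreg
  rw [hsub, Pi.sub_apply, hpull, ← hreg, sub_self, Pi.zero_apply]

theorem integral_inner_comp_sub_condG_eq_zero [Fintype α] (hm : m ≤ mΩ) [IsFiniteMeasure μ]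
    (hA : Measurable A) (hY : Integrable Y μ) (hc : 0 < c)
    (hH : ∀ a, ∀ᵐ ω ∂μ, c ≤ condH μ m A a ω) {u : α → Ω → EuclideanSpace ℝ (Fin n)}
    (hu : ∀ a, StronglyMeasurable[m] (u a)) {C : ℝ} (huC : ∀ a, ∀ᵐ ω ∂μ, ‖u a ω‖ ≤ C) :
    ∫ ω, ⟪u (A ω) ω, Y ω - condG μ m A Y (A ω) ω⟫ ∂μ = 0 := by
  rw [integral_inner_comp_eq_sum_condExp hm hA hu huC (z := fun a ω => Y ω - condG μ m A Y a ω)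
    fun a => hY.sub (integrable_condG hm hc (hH a))]
  refine sum_eq_zero fun a _ => ?_
  rw [integral_congr_ae ((condExp_treatIndicator_smul_sub_condG hm hA hY hc (hH a)).mono
    fun ω h => congrArg (⟪u a ω, ·⟫) h)]
  simp

theorem integrable_inner_sub_condG_div_condH [Fintype α] (hm : m ≤ mΩ) (hA : Measurable A)
    (hY : Integrable Y μ) (hc : 0 < c) (hH : ∀ a, ∀ᵐ ω ∂μ, c ≤ condH μ m A a ω)
    {w : α → Ω → EuclideanSpace ℝ (Fin n)} (hw : ∀ a, StronglyMeasurable[m] (w a)) {C : ℝ}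
    (hwC : ∀ a ω, ‖w a ω‖ ≤ C) :
    Integrable (fun ω => ⟪w (A ω) ω, Y ω - condG μ m A Y (A ω) ω⟫ / condH μ m A (A ω) ω) μ := by
  simp_rw [div_eq_inv_mul, ← real_inner_smul_left]
  exact integrable_inner_comp hA (u := fun a ω => (condH μ m A a ω)⁻¹ • w a ω)
    (z := fun a ω => Y ω - condG μ m A Y a ω)
    (fun a => (((stronglyMeasurable_inv_condH a).smul (hw a)).mono hm).aestronglyMeasurable)
    (fun a => ae_norm_inv_condH_smul_le hc (hH a) (hwC a))
    fun a => hY.sub (integrable_condG hm hc (hH a))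

theorem integral_inner_sub_condG_div_condH_eq_zero [Fintype α] (hm : m ≤ mΩ)
    [IsFiniteMeasure μ] (hA : Measurable A) (hY : Integrable Y μ) (hc : 0 < c)
    (hH : ∀ a, ∀ᵐ ω ∂μ, c ≤ condH μ m A a ω) {w : α → Ω → EuclideanSpace ℝ (Fin n)}
    (hw : ∀ a, StronglyMeasurable[m] (w a)) {C : ℝ} (hwC : ∀ a ω, ‖w a ω‖ ≤ C) :
    ∫ ω, ⟪w (A ω) ω, Y ω - condG μ m A Y (A ω) ω⟫ / condH μ m A (A ω) ω ∂μ = 0 := by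
  simp_rw [div_eq_inv_mul, ← real_inner_smul_left]
  exact integral_inner_comp_sub_condG_eq_zero hm hA hY hc hH
    (u := fun a ω => (condH μ m A a ω)⁻¹ • w a ω)
    (fun a => (stronglyMeasurable_inv_condH a).smul (hw a))
    fun a => ae_norm_inv_condH_smul_le hc (hH a) (hwC a)

end Regression

/-- (Unbiasedness of the efficient influence function, property (B) in the proof
of Theorem 1.)  The uncentered efficient influence function
`φ_unc = ∑_a ⟨w(a) + φ(A,a), G(a)⟩ + ⟨w(A), Y − G(A)⟩/H(A)` has mean equal to
the target functional `Ψ(w) = E[∑_a ⟨w(a), G(a)⟩]`; equivalently, the centered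
influence function `φ_unc − Ψ(w)` has mean zero. -/
theorem stmt2 {Ω : Type*} {mΩ : MeasurableSpace Ω}
    (μ : Measure Ω) [IsProbabilityMeasure μ]
    (m : MeasurableSpace Ω) (hm : m ≤ mΩ)
    {α : Type*} [Fintype α] [DecidableEq α] [MeasurableSpace α] [MeasurableSingletonClass α]
    {n : ℕ}
    (A : Ω → α) (hA : Measurable[mΩ] A)
    (Y : Ω → EuclideanSpace ℝ (Fin n)) (hY : Measurable[mΩ] Y)
    (CY : ℝ) (hYb : ∀ ω, ‖Y ω‖ ≤ CY)
    -- positivity of the cluster-level treatment probability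
    (c : ℝ) (hc : 0 < c)
    (hH : ∀ a : α, ∀ᵐ ω ∂μ, c ≤ condH μ m A a ω)
    -- bounded m-measurable weight functions
    (w : α → Ω → EuclideanSpace ℝ (Fin n)) (hw : ∀ a, Measurable[m] (w a))
    (Cw : ℝ) (hwb : ∀ a ω, ‖w a ω‖ ≤ Cw)
    -- bounded m-measurable influence functions of the weights, with conditional mean zero
    (φ : α → α → Ω → EuclideanSpace ℝ (Fin n)) (hφ : ∀ a' a, Measurable[m] (φ a' a))
    (Cφ : ℝ) (hφb : ∀ a' a ω, ‖φ a' a ω‖ ≤ Cφ)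
    (hφ0 : ∀ a : α, ∀ᵐ ω ∂μ, ∑ a', condH μ m A a' ω • φ a' a ω = 0) :
    ∫ ω, ((∑ a, ⟪w a ω + φ (A ω) a ω, condG μ m A Y a ω⟫)
        + ⟪w (A ω) ω, Y ω - condG μ m A Y (A ω) ω⟫ / condH μ m A (A ω) ω) ∂μ
      = ∫ ω, ∑ a, ⟪w a ω, condG μ m A Y a ω⟫ ∂μ := by
  have hYi : Integrable Y μ := .of_bound hY.aestronglyMeasurable CY (ae_of_all _ hYb)
  have hG a : Integrable (condG μ m A Y a) μ := integrable_condG hm hc (hH a)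
  have hwm a : StronglyMeasurable[m] (w a) := (hw a).stronglyMeasurable
  have hφm a' a : StronglyMeasurable[m] (φ a' a) := (hφ a' a).stronglyMeasurable
  have hΦ a : Integrable (fun ω => ⟪φ (A ω) a ω, condG μ m A Y a ω⟫) μ :=
    integrable_inner_comp hA (u := fun a' => φ a' a) (z := fun _ => condG μ m A Y a)
      (fun a' => ((hφm a' a).mono hm).aestronglyMeasurable) (fun a' => ae_of_all _ (hφb a' a))
      fun _ => hG a
  have hΦ0 a : ∫ ω, ⟪φ (A ω) a ω, condG μ m A Y a ω⟫ ∂μ = 0 :=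
    integral_inner_comp_eq_zero hm hA (hφm · a) (fun a' => ae_of_all _ (hφb a' a)) (hφ0 a)
      (stronglyMeasurable_condG a) (hG a)
  have hR := integrable_inner_sub_condG_div_condH hm hA hYi hc hH hwm hwb
  calc _ = ∫ ω, ((∑ a, ⟪w a ω, condG μ m A Y a ω⟫) + ((∑ a, ⟪φ (A ω) a ω, condG μ m A Y a ω⟫)
          + ⟪w (A ω) ω, Y ω - condG μ m A Y (A ω) ω⟫ / condH μ m A (A ω) ω)) ∂μ := by
        simp only [inner_add_left, Finset.sum_add_distrib, add_assoc]
    _ = ∫ ω, ∑ a, ⟪w a ω, condG μ m A Y a ω⟫ ∂μ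
          + ((∑ a, ∫ ω, ⟪φ (A ω) a ω, condG μ m A Y a ω⟫ ∂μ)
            + ∫ ω, ⟪w (A ω) ω, Y ω - condG μ m A Y (A ω) ω⟫ / condH μ m A (A ω) ω ∂μ) := by
        have hX a := integrable_inner_of_bdd_left ((hwm a).mono hm).aestronglyMeasurable
          (ae_of_all _ (hwb a)) (hG a)
        rw [integral_add (integrable_finsetSum _ fun a _ => hX a)
            (by exact (integrable_finsetSum _ fun a _ => hΦ a).add hR),
          integral_add (integrable_finsetSum _ fun a _ => hΦ a) hR,
          integral_finsetSum _ fun a _ => hΦ a]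
    _ = _ := by
        rw [Finset.sum_eq_zero fun a _ => hΦ0 a,
          integral_inner_sub_condG_div_condH_eq_zero hm hA hYi hc hH hwm hwb, add_zero, add_zero]
end

section
/- (Quantitative bias bound underlying Theorem 2.) In the setting of the bias decomposition, suppose additionally that ‖G(a)‖ ≤ B and ‖ŵ(a)‖ ≤ C_w μ-a.e. for all a ∈ α. Then |E[φ̂_unc] − Ψ(w)| ≤ B · E[∑_{a∈α} ‖ŵ(a) − w(a) + ∑_{a'∈α} H(a')·φ̂(a', a)‖] + (C_w/c) · (E[∑_{a∈α} ‖Ĝ(a) − G(a)‖²])^{1/2} · (E[∑_{a∈α} |Ĥ(a) − H(a)|²])^{1/2} + (E[∑_{a∈α} ‖φ̂(A, a) − φ(A, a)‖²])^{1/2} · (E[∑_{a∈α} ‖Ĝ(a) − G(a)‖²])^{1/2}. -/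
/-!
Write `φ̂_unc = g + f(A) + ⟪v(A), Y⟫` with `g`, `f`, `v` built from the `m`-measurable nuisance
estimates. Since `f(A) = ∑ₐ 1_{A=a} f(a)`, the pull-out property of the conditional expectation
gives `E[f(A)] = E[∑ₐ H(a) f(a)]` and `E[⟪v(A), Y⟫] = E[∑ₐ H(a) ⟪v(a), G(a)⟫]`. After this,
`E[φ̂_unc] − Ψ(w)` is the integral of a pointwise identity with three terms:
`⟪ŵ − w + ∑ H φ̂, G⟫`, bounded using `‖G‖ ≤ B`; `((Ĥ − H)/Ĥ) ⟪ŵ, Ĝ − G⟫`, bounded using `Ĥ ≥ c`,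
`‖ŵ‖ ≤ C_w` and Cauchy–Schwarz; and `⟪∑ H φ̂, Ĝ − G⟫`, which by `∑ H φ = 0` and the pull-out
property once more has the same mean as `⟪φ̂(A) − φ(A), Ĝ − G⟫`, bounded by Cauchy–Schwarz.
Every function involved is essentially bounded, which keeps all these integrals finite.
-/

open MeasureTheory RealInnerProductSpace

open scoped ENNReal

section Integrals

variable {Ω ι E F G : Type*} {mΩ : MeasurableSpace Ω} {μ : Measure Ω}

theorem MeasureTheory.MemLp.bilin [NormedAddCommGroup E] [NormedSpace ℝ E]
    [NormedAddCommGroup F] [NormedSpace ℝ F] [NormedAddCommGroup G] [NormedSpace ℝ G]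
    {p q r : ℝ≥0∞} [ENNReal.HolderTriple p q r] (L : F →L[ℝ] E →L[ℝ] G)
    {f : Ω → F} {g : Ω → E} (hf : MemLp f p μ) (hg : MemLp g q μ) :
    MemLp (fun ω => L (f ω) (g ω)) r μ :=
  hf.of_bilin (fun x y => L x y) ‖L‖₊ hg (L.aestronglyMeasurable_comp₂ hf.1 hg.1)
    (ae_of_all _ fun _ => by rw [← NNReal.coe_le_coe]; push_cast; exact L.le_opNorm₂ _ _)

theorem MeasureTheory.MemLp.inner [NormedAddCommGroup E] [InnerProductSpace ℝ E]
    {p q r : ℝ≥0∞} [ENNReal.HolderTriple p q r] {f g : Ω → E}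
    (hf : MemLp f p μ) (hg : MemLp g q μ) : MemLp (fun ω => ⟪f ω, g ω⟫) r μ :=
  hf.bilin (innerSL ℝ) hg

theorem MeasureTheory.integral_bilin_condExp {m : MeasurableSpace Ω}
    [NormedAddCommGroup E] [NormedSpace ℝ E] [CompleteSpace E]
    [NormedAddCommGroup F] [NormedSpace ℝ F] [NormedAddCommGroup G] [NormedSpace ℝ G]
    [CompleteSpace G] (hm : m ≤ mΩ) [SigmaFinite (μ.trim hm)] (L : F →L[ℝ] E →L[ℝ] G)
    {f : Ω → F} {g : Ω → E} (hf : StronglyMeasurable[m] f)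
    (hfg : Integrable (fun ω => L (f ω) (g ω)) μ) (hg : Integrable g μ) :
    ∫ ω, L (f ω) (g ω) ∂μ = ∫ ω, L (f ω) (μ[g|m] ω) ∂μ := by
  rw [← integral_condExp hm]
  exact integral_congr_ae (condExp_bilin_of_stronglyMeasurable_left L hf hfg hg)

theorem memLp_top_of_measurable_of_ae_le {m : MeasurableSpace Ω} [NormedAddCommGroup E]
    [MeasurableSpace E] [OpensMeasurableSpace E] [SecondCountableTopology E] (hm : m ≤ mΩ)
    {f : Ω → E} (hf : Measurable[m] f) {C : ℝ} (hC : ∀ᵐ ω ∂μ, ‖f ω‖ ≤ C) : MemLp f ∞ μ :=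
  memLp_top_of_bound (hf.mono hm le_rfl).aestronglyMeasurable C hC

theorem integral_mul_le_sqrt_mul_sqrt {f g : Ω → ℝ} (hf0 : 0 ≤ᵐ[μ] f) (hg0 : 0 ≤ᵐ[μ] g)
    (hf : MemLp f 2 μ) (hg : MemLp g 2 μ) :
    ∫ ω, f ω * g ω ∂μ ≤ √(∫ ω, f ω ^ 2 ∂μ) * √(∫ ω, g ω ^ 2 ∂μ) := by
  have h := integral_mul_le_Lp_mul_Lq_of_nonneg Real.HolderConjugate.two_two hf0 hg0
    (by simpa using hf) (by simpa using hg)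
  simpa [Real.sqrt_eq_rpow] using h

variable [Fintype ι]

theorem integral_sum_mul_le_sqrt_mul_sqrt {f g : ι → Ω → ℝ} (hf0 : ∀ i, 0 ≤ᵐ[μ] f i)
    (hg0 : ∀ i, 0 ≤ᵐ[μ] g i) (hf : ∀ i, MemLp (f i) 2 μ) (hg : ∀ i, MemLp (g i) 2 μ) :
    ∫ ω, ∑ i, f i ω * g i ω ∂μ
      ≤ √(∫ ω, ∑ i, f i ω ^ 2 ∂μ) * √(∫ ω, ∑ i, g i ω ^ 2 ∂μ) := by
  rw [integral_finsetSum (f := fun i ω => f i ω * g i ω) _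
      fun i _ => (hf i).integrable_mul (hg i),
    integral_finsetSum _ fun i _ => (hf i).integrable_sq,
    integral_finsetSum _ fun i _ => (hg i).integrable_sq]
  calc ∑ i, ∫ ω, f i ω * g i ω ∂μ
      ≤ ∑ i, √(∫ ω, f i ω ^ 2 ∂μ) * √(∫ ω, g i ω ^ 2 ∂μ) :=
        Finset.sum_le_sum fun i _ => integral_mul_le_sqrt_mul_sqrt (hf0 i) (hg0 i) (hf i) (hg i)
    _ ≤ _ := Real.sum_sqrt_mul_sqrt_le _ (fun i => integral_nonneg fun _ => sq_nonneg _)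
        (fun i => integral_nonneg fun _ => sq_nonneg _)

variable [NormedAddCommGroup E] [InnerProductSpace ℝ E]

theorem abs_integral_sum_inner_le {x y : ι → Ω → E} (hx : ∀ i, MemLp (x i) 2 μ)
    (hy : ∀ i, MemLp (y i) 2 μ) :
    |∫ ω, ∑ i, ⟪x i ω, y i ω⟫ ∂μ|
      ≤ √(∫ ω, ∑ i, ‖x i ω‖ ^ 2 ∂μ) * √(∫ ω, ∑ i, ‖y i ω‖ ^ 2 ∂μ) := by
  refine (norm_integral_le_of_norm_le (f := fun ω => ∑ i, ⟪x i ω, y i ω⟫)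
    (g := fun ω => ∑ i, ‖x i ω‖ * ‖y i ω‖)
    (integrable_finsetSum (f := fun i ω => ‖x i ω‖ * ‖y i ω‖) _
      fun i _ => (hx i).norm.integrable_mul (hy i).norm)
    (ae_of_all _ fun ω => ?_)).trans ?_
  · exact (Finset.abs_sum_le_sum_abs _ _).trans
      (Finset.sum_le_sum fun i _ => abs_real_inner_le_norm _ _)
  · exact integral_sum_mul_le_sqrt_mul_sqrt (fun i => ae_of_all _ fun _ => norm_nonneg _)
      (fun i => ae_of_all _ fun _ => norm_nonneg _) (fun i => (hx i).norm) fun i => (hy i).norm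

theorem abs_integral_sum_inner_le_mul_integral {x y : ι → Ω → E} {B : ℝ}
    (hx : ∀ i, Integrable (x i) μ) (hyB : ∀ i, ∀ᵐ ω ∂μ, ‖y i ω‖ ≤ B) :
    |∫ ω, ∑ i, ⟪x i ω, y i ω⟫ ∂μ| ≤ B * ∫ ω, ∑ i, ‖x i ω‖ ∂μ := by
  rw [← integral_const_mul]
  refine norm_integral_le_of_norm_le (f := fun ω => ∑ i, ⟪x i ω, y i ω⟫)
    ((integrable_finsetSum _ fun i _ => (hx i).norm).const_mul B) ?_
  filter_upwards [ae_all_iff.2 hyB] with ω hω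
  rw [Finset.mul_sum]
  refine (Finset.abs_sum_le_sum_abs _ _).trans (Finset.sum_le_sum fun i _ => ?_)
  calc |⟪x i ω, y i ω⟫| ≤ ‖x i ω‖ * ‖y i ω‖ := abs_real_inner_le_norm _ _
    _ ≤ ‖x i ω‖ * B := by gcongr; exact hω i
    _ = B * ‖x i ω‖ := mul_comm _ _

theorem abs_integral_sum_div_mul_inner_le [NeZero μ] {H Hh : ι → Ω → ℝ} {u x : ι → Ω → E}
    {c Cw : ℝ} (hc : 0 < c) (hHh : ∀ i, ∀ᵐ ω ∂μ, c ≤ Hh i ω) (hu : ∀ i, ∀ᵐ ω ∂μ, ‖u i ω‖ ≤ Cw)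
    (hx : ∀ i, MemLp (x i) 2 μ) (hHH : ∀ i, MemLp (fun ω => Hh i ω - H i ω) 2 μ) :
    |∫ ω, ∑ i, (Hh i ω - H i ω) / Hh i ω * ⟪u i ω, x i ω⟫ ∂μ|
      ≤ Cw / c * √(∫ ω, ∑ i, ‖x i ω‖ ^ 2 ∂μ) * √(∫ ω, ∑ i, |Hh i ω - H i ω| ^ 2 ∂μ) := by
  rcases isEmpty_or_nonempty ι with hι | ⟨⟨i₀⟩⟩
  · simp
  obtain ⟨ω₀, hω₀⟩ := (hu i₀).exists
  have hCwc : 0 ≤ Cw / c := div_nonneg ((norm_nonneg _).trans hω₀) hc.le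
  calc _ ≤ ∫ ω, ∑ i, Cw / c * (‖x i ω‖ * |Hh i ω - H i ω|) ∂μ := by
        refine norm_integral_le_of_norm_le
          (f := fun ω => ∑ i, (Hh i ω - H i ω) / Hh i ω * ⟪u i ω, x i ω⟫)
          (integrable_finsetSum (f := fun i ω => Cw / c * (‖x i ω‖ * |Hh i ω - H i ω|)) _
            fun i _ => ((hx i).norm.integrable_mul (hHH i).norm).const_mul _) ?_
        filter_upwards [ae_all_iff.2 hHh, ae_all_iff.2 hu] with ω hHhω huω
        refine (Finset.abs_sum_le_sum_abs _ _).trans (Finset.sum_le_sum fun i _ => ?_)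
        have hinner : |⟪u i ω, x i ω⟫| ≤ Cw * ‖x i ω‖ :=
          (abs_real_inner_le_norm _ _).trans (by gcongr; exact huω i)
        calc |(Hh i ω - H i ω) / Hh i ω * ⟪u i ω, x i ω⟫|
            = |Hh i ω - H i ω| / |Hh i ω| * |⟪u i ω, x i ω⟫| := by rw [abs_mul, abs_div]
          _ ≤ |Hh i ω - H i ω| / c * (Cw * ‖x i ω‖) :=
            mul_le_mul (div_le_div_of_nonneg_left (abs_nonneg _) hc
              ((hHhω i).trans (le_abs_self _))) hinner (abs_nonneg _) (by positivity)
          _ = Cw / c * (‖x i ω‖ * |Hh i ω - H i ω|) := by ring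
    _ = Cw / c * ∫ ω, ∑ i, ‖x i ω‖ * |Hh i ω - H i ω| ∂μ := by
        rw [← integral_const_mul]
        simp only [Finset.mul_sum]
    _ ≤ Cw / c * (√(∫ ω, ∑ i, ‖x i ω‖ ^ 2 ∂μ) * √(∫ ω, ∑ i, |Hh i ω - H i ω| ^ 2 ∂μ)) :=
        mul_le_mul_of_nonneg_left (integral_sum_mul_le_sqrt_mul_sqrt
          (fun i => ae_of_all _ fun _ => norm_nonneg _)
          (fun i => ae_of_all _ fun _ => abs_nonneg _) (fun i => (hx i).norm)
          fun i => (hHH i).norm) hCwc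
    _ = _ := (mul_assoc _ _ _).symm

end Integrals

theorem pointwise_bias_decomposition {E : Type*} [NormedAddCommGroup E] [InnerProductSpace ℝ E]
    (u w g G K : E) (H : ℝ) {Hh : ℝ} (hHh : Hh ≠ 0) :
    ⟪u + K, g⟫ + H * ⟪Hh⁻¹ • u, G - g⟫ - ⟪w, G⟫
      = ⟪u - w + K, G⟫ + (Hh - H) / Hh * ⟪u, g - G⟫ + ⟪K, g - G⟫ := by
  simp only [inner_add_left, inner_sub_left, inner_sub_right, real_inner_smul_left]
  field_simp
  ring

section Treatment

variable {Ω α : Type*} {m mΩ : MeasurableSpace Ω} {μ : Measure Ω} [DecidableEq α] {A : Ω → α}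

theorem measurable_condH (a : α) : Measurable[m] (condH μ m A a) :=
  stronglyMeasurable_condExp.measurable

theorem measurable_condG {n : ℕ} (Y : Ω → EuclideanSpace ℝ (Fin n)) (a : α) :
    Measurable[m] (condG μ m A Y a) :=
  (measurable_condH a).inv.smul stronglyMeasurable_condExp.measurable

variable [MeasurableSpace α] [MeasurableSingletonClass α]

theorem memLp_top_treatment_indicator (hA : Measurable A) (a : α) :
    MemLp (fun ω => if A ω = a then (1:ℝ) else 0) ∞ μ :=
  memLp_top_of_bound (measurable_const.ite (hA (measurableSet_singleton a))
    measurable_const).aestronglyMeasurable 1 (ae_of_all _ fun ω => by split_ifs <;> simp)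

theorem memLp_top_condH (hA : Measurable A) (a : α) : MemLp (condH μ m A a) ∞ μ :=
  (memLp_top_treatment_indicator hA a).condExp le_top

variable [Fintype α]

theorem memLp_comp_treatment {E : Type*} [NormedAddCommGroup E] [NormedSpace ℝ E]
    (hA : Measurable A) {p : ℝ≥0∞} {v : α → Ω → E} (hv : ∀ a, MemLp (v a) p μ) :
    MemLp (fun ω => v (A ω) ω) p μ := by
  have h : (fun ω => v (A ω) ω) = fun ω => ∑ a, (if A ω = a then (1:ℝ) else 0) • v a ω := by
    ext ω; simp
  rw [h]
  exact memLp_finsetSum _ fun a _ => (hv a).smul (memLp_top_treatment_indicator hA a)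

variable [IsFiniteMeasure μ]

theorem integral_bilin_comp_treatment {E F G : Type*}
    [NormedAddCommGroup E] [NormedSpace ℝ E] [CompleteSpace E]
    [NormedAddCommGroup F] [NormedSpace ℝ F] [NormedAddCommGroup G] [NormedSpace ℝ G]
    [CompleteSpace G] (hm : m ≤ mΩ) (hA : Measurable A) (L : F →L[ℝ] E →L[ℝ] G)
    {v : α → Ω → F} (hv : ∀ a, StronglyMeasurable[m] (v a)) (hv' : ∀ a, MemLp (v a) ∞ μ)
    {Z : Ω → E} (hZ : MemLp Z ∞ μ) :
    ∫ ω, L (v (A ω) ω) (Z ω) ∂μ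
      = ∑ a, ∫ ω, L (v a ω) (μ[fun ω => (if A ω = a then (1:ℝ) else 0) • Z ω|m] ω) ∂μ := by
  have hAZ a : MemLp (fun ω => (if A ω = a then (1:ℝ) else 0) • Z ω) ∞ μ :=
    hZ.smul (memLp_top_treatment_indicator hA a)
  have hL a := ((hv' a).bilin L (hAZ a)).integrable le_top
  calc ∫ ω, L (v (A ω) ω) (Z ω) ∂μ
      = ∫ ω, ∑ a, L (v a ω) ((if A ω = a then (1:ℝ) else 0) • Z ω) ∂μ := by
        congr 1; ext ω; simp [apply_ite]
    _ = _ := by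
        rw [integral_finsetSum _ fun a _ => hL a]
        exact Finset.sum_congr rfl fun a _ =>
          integral_bilin_condExp hm L (hv a) (hL a) ((hAZ a).integrable le_top)

theorem integral_comp_treatment (hm : m ≤ mΩ) (hA : Measurable A)
    {f : α → Ω → ℝ} (hf : ∀ a, Measurable[m] (f a)) (hf' : ∀ a, MemLp (f a) ∞ μ) :
    ∫ ω, f (A ω) ω ∂μ = ∫ ω, ∑ a, condH μ m A a ω * f a ω ∂μ := by
  have h := integral_bilin_comp_treatment hm hA (ContinuousLinearMap.mul ℝ ℝ)
    (fun a => (hf a).stronglyMeasurable) hf' (memLp_const (1:ℝ))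
  simp only [ContinuousLinearMap.mul_apply', mul_one, smul_eq_mul] at h
  rw [h, integral_finsetSum _ fun a _ => ((hf' a).mul' (memLp_top_condH hA a)).integrable le_top]
  simp only [condH, mul_comm]

variable {n : ℕ} {Y : Ω → EuclideanSpace ℝ (Fin n)}

theorem integral_inner_comp_treatment (hm : m ≤ mΩ) (hA : Measurable A) (hY : MemLp Y ∞ μ)
    (hH : ∀ a, ∀ᵐ ω ∂μ, condH μ m A a ω ≠ 0) (hG : ∀ a, MemLp (condG μ m A Y a) ∞ μ)
    {v : α → Ω → EuclideanSpace ℝ (Fin n)} (hv : ∀ a, Measurable[m] (v a))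
    (hv' : ∀ a, MemLp (v a) ∞ μ) :
    ∫ ω, ⟪v (A ω) ω, Y ω⟫ ∂μ = ∫ ω, ∑ a, condH μ m A a ω * ⟪v a ω, condG μ m A Y a ω⟫ ∂μ := by
  refine (integral_bilin_comp_treatment hm hA (innerSL ℝ) (fun a => (hv a).stronglyMeasurable)
    hv' hY).trans ?_
  rw [integral_finsetSum _ fun a _ =>
    (((hv' a).inner (r := ∞) (hG a)).mul' (memLp_top_condH hA a)).integrable le_top]
  refine Finset.sum_congr rfl fun a _ => integral_congr_ae ?_
  filter_upwards [hH a] with ω hω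
  rw [← real_inner_smul_right, condG, smul_inv_smul₀ hω]
  rfl

theorem integral_estimator_eq (hm : m ≤ mΩ) (hA : Measurable A) (hY : MemLp Y ∞ μ)
    (hH : ∀ a, ∀ᵐ ω ∂μ, condH μ m A a ω ≠ 0) (hG : ∀ a, MemLp (condG μ m A Y a) ∞ μ)
    {Gh wh : α → Ω → EuclideanSpace ℝ (Fin n)} {φh : α → α → Ω → EuclideanSpace ℝ (Fin n)}
    {Hh : α → Ω → ℝ}
    (hGh : ∀ a, Measurable[m] (Gh a)) (hGh' : ∀ a, MemLp (Gh a) ∞ μ)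
    (hwh : ∀ a, Measurable[m] (wh a)) (hwh' : ∀ a, MemLp (wh a) ∞ μ)
    (hφh : ∀ a' a, Measurable[m] (φh a' a)) (hφh' : ∀ a' a, MemLp (φh a' a) ∞ μ)
    (hHh : ∀ a, Measurable[m] (Hh a)) (hHh' : ∀ a, MemLp (fun ω => (Hh a ω)⁻¹) ∞ μ) :
    ∫ ω, ((∑ a, ⟪wh a ω + φh (A ω) a ω, Gh a ω⟫)
        + ⟪wh (A ω) ω, Y ω - Gh (A ω) ω⟫ / Hh (A ω) ω) ∂μ
      = ∫ ω, ∑ a, (⟪wh a ω + ∑ a', condH μ m A a' ω • φh a' a ω, Gh a ω⟫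
          + condH μ m A a ω * ⟪(Hh a ω)⁻¹ • wh a ω, condG μ m A Y a ω - Gh a ω⟫) ∂μ := by
  set v : α → Ω → EuclideanSpace ℝ (Fin n) := fun a ω => (Hh a ω)⁻¹ • wh a ω
  set f : α → Ω → ℝ := fun a' ω => ∑ a, ⟪φh a' a ω, Gh a ω⟫ - ⟪v a' ω, Gh a' ω⟫
  have hv a : Measurable[m] (v a) := (hHh a).inv.smul (hwh a)
  have hv' a : MemLp (v a) ∞ μ := (hwh' a).smul (hHh' a)
  have hf a : Measurable[m] (f a) :=
    (Finset.measurable_sum _ fun a' _ => (hφh a a').inner (hGh a')).sub ((hv a).inner (hGh a))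
  have hf' a : MemLp (f a) ∞ μ :=
    (memLp_finsetSum _ fun a' _ => (hφh' a a').inner (hGh' a')).sub ((hv' a).inner (hGh' a))
  have hg : Integrable (fun ω => ∑ a, ⟪wh a ω, Gh a ω⟫) μ :=
    (memLp_finsetSum _ fun a _ => (hwh' a).inner (r := ∞) (hGh' a)).integrable le_top
  have hfA : Integrable (fun ω => f (A ω) ω) μ := (memLp_comp_treatment hA hf').integrable le_top
  have hvY : Integrable (fun ω => ⟪v (A ω) ω, Y ω⟫) μ :=
    ((memLp_comp_treatment hA hv').inner (r := ∞) hY).integrable le_top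
  have hHf : Integrable (fun ω => ∑ a, condH μ m A a ω * f a ω) μ :=
    (memLp_finsetSum _ fun a _ => (hf' a).mul' (memLp_top_condH hA a)).integrable le_top
  have hHvG : Integrable (fun ω => ∑ a, condH μ m A a ω * ⟪v a ω, condG μ m A Y a ω⟫) μ :=
    (memLp_finsetSum _ fun a _ =>
      ((hv' a).inner (r := ∞) (hG a)).mul' (memLp_top_condH hA a)).integrable le_top
  calc _ = ∫ ω, (∑ a, ⟪wh a ω, Gh a ω⟫ + f (A ω) ω) + ⟪v (A ω) ω, Y ω⟫ ∂μ := by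
        congr 1; ext ω
        simp only [f, v, inner_add_left, inner_sub_right, real_inner_smul_left,
          Finset.sum_add_distrib, div_eq_inv_mul]
        ring
    _ = (∫ ω, ∑ a, ⟪wh a ω, Gh a ω⟫ ∂μ + ∫ ω, f (A ω) ω ∂μ) + ∫ ω, ⟪v (A ω) ω, Y ω⟫ ∂μ := by
        have hgfA : Integrable (fun ω => ∑ a, ⟪wh a ω, Gh a ω⟫ + f (A ω) ω) μ := hg.add hfA
        rw [integral_add hgfA hvY, integral_add hg hfA]
    _ = (∫ ω, ∑ a, ⟪wh a ω, Gh a ω⟫ ∂μ + ∫ ω, ∑ a, condH μ m A a ω * f a ω ∂μ)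
          + ∫ ω, ∑ a, condH μ m A a ω * ⟪v a ω, condG μ m A Y a ω⟫ ∂μ := by
        rw [integral_comp_treatment hm hA hf hf',
          integral_inner_comp_treatment hm hA hY hH hG hv hv']
    _ = _ := by
        have hgHf : Integrable (fun ω => ∑ a, ⟪wh a ω, Gh a ω⟫
            + ∑ a, condH μ m A a ω * f a ω) μ := hg.add hHf
        rw [← integral_add hg hHf, ← integral_add hgHf hHvG]
        congr 1; ext ω
        simp only [f, v, inner_add_left, inner_sub_right, sum_inner, real_inner_smul_left, mul_sub,
          Finset.mul_sum, Finset.sum_add_distrib, Finset.sum_sub_distrib]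
        rw [Finset.sum_comm]
        ring

theorem integral_estimator_sub_integral_target_eq (hm : m ≤ mΩ) (hA : Measurable A)
    (hY : MemLp Y ∞ μ) (hH : ∀ a, ∀ᵐ ω ∂μ, condH μ m A a ω ≠ 0)
    (hG : ∀ a, MemLp (condG μ m A Y a) ∞ μ)
    {w Gh wh : α → Ω → EuclideanSpace ℝ (Fin n)} {φh : α → α → Ω → EuclideanSpace ℝ (Fin n)}
    {Hh : α → Ω → ℝ} (hw : ∀ a, MemLp (w a) ∞ μ)
    (hGh : ∀ a, Measurable[m] (Gh a)) (hGh' : ∀ a, MemLp (Gh a) ∞ μ)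
    (hwh : ∀ a, Measurable[m] (wh a)) (hwh' : ∀ a, MemLp (wh a) ∞ μ)
    (hφh : ∀ a' a, Measurable[m] (φh a' a)) (hφh' : ∀ a' a, MemLp (φh a' a) ∞ μ)
    (hHh : ∀ a, Measurable[m] (Hh a)) (hHh' : ∀ a, MemLp (Hh a) ∞ μ)
    (hHhinv : ∀ a, MemLp (fun ω => (Hh a ω)⁻¹) ∞ μ) (hHh0 : ∀ a, ∀ᵐ ω ∂μ, Hh a ω ≠ 0) :
    (∫ ω, ((∑ a, ⟪wh a ω + φh (A ω) a ω, Gh a ω⟫)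
        + ⟪wh (A ω) ω, Y ω - Gh (A ω) ω⟫ / Hh (A ω) ω) ∂μ)
      - ∫ ω, ∑ a, ⟪w a ω, condG μ m A Y a ω⟫ ∂μ
      = ∫ ω, ∑ a, ⟪wh a ω - w a ω + ∑ a', condH μ m A a' ω • φh a' a ω,
            condG μ m A Y a ω⟫ ∂μ
        + ∫ ω, ∑ a, (Hh a ω - condH μ m A a ω) / Hh a ω
            * ⟪wh a ω, Gh a ω - condG μ m A Y a ω⟫ ∂μ
        + ∫ ω, ∑ a, ⟪∑ a', condH μ m A a' ω • φh a' a ω,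
            Gh a ω - condG μ m A Y a ω⟫ ∂μ := by
  have hK a : MemLp (fun ω => ∑ a', condH μ m A a' ω • φh a' a ω) ∞ μ :=
    memLp_finsetSum _ fun a' _ => (hφh' a' a).smul (memLp_top_condH hA a')
  have hEst : Integrable (fun ω => ∑ a, (⟪wh a ω + ∑ a', condH μ m A a' ω • φh a' a ω, Gh a ω⟫
      + condH μ m A a ω * ⟪(Hh a ω)⁻¹ • wh a ω, condG μ m A Y a ω - Gh a ω⟫)) μ :=
    (memLp_finsetSum _ fun a _ => (((hwh' a).add (hK a)).inner (r := ∞) (hGh' a)).add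
      ((((hwh' a).smul (r := ∞) (hHhinv a)).inner (r := ∞) ((hG a).sub (hGh' a))).mul' (r := ∞)
        (memLp_top_condH hA a))).integrable le_top
  have hΨ : Integrable (fun ω => ∑ a, ⟪w a ω, condG μ m A Y a ω⟫) μ :=
    (memLp_finsetSum _ fun a _ => (hw a).inner (r := ∞) (hG a)).integrable le_top
  have hT₁ : Integrable (fun ω => ∑ a, ⟪wh a ω - w a ω + ∑ a', condH μ m A a' ω • φh a' a ω,
      condG μ m A Y a ω⟫) μ :=
    (memLp_finsetSum _ fun a _ =>
      (((hwh' a).sub (hw a)).add (hK a)).inner (r := ∞) (hG a)).integrable le_top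
  have hT₂ : Integrable (fun ω => ∑ a, (Hh a ω - condH μ m A a ω) / Hh a ω
      * ⟪wh a ω, Gh a ω - condG μ m A Y a ω⟫) μ :=
    (memLp_finsetSum _ fun a _ => ((hwh' a).inner (r := ∞) ((hGh' a).sub (hG a))).mul'
      ((hHhinv a).mul' (r := ∞) ((hHh' a).sub (memLp_top_condH hA a)))).integrable le_top
  have hT₃ : Integrable (fun ω => ∑ a, ⟪∑ a', condH μ m A a' ω • φh a' a ω,
      Gh a ω - condG μ m A Y a ω⟫) μ :=
    (memLp_finsetSum _ fun a _ => (hK a).inner (r := ∞) ((hGh' a).sub (hG a))).integrable le_top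
  have hT₁₂ : Integrable (fun ω =>
      ∑ a, ⟪wh a ω - w a ω + ∑ a', condH μ m A a' ω • φh a' a ω, condG μ m A Y a ω⟫
        + ∑ a, (Hh a ω - condH μ m A a ω) / Hh a ω
          * ⟪wh a ω, Gh a ω - condG μ m A Y a ω⟫) μ := hT₁.add hT₂
  rw [integral_estimator_eq hm hA hY hH hG hGh hGh' hwh hwh' hφh hφh' hHh hHhinv,
    ← integral_sub hEst hΨ, ← integral_add hT₁ hT₂, ← integral_add hT₁₂ hT₃]
  refine integral_congr_ae ?_
  filter_upwards [ae_all_iff.2 hHh0] with ω hω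
  simp only [← Finset.sum_sub_distrib, ← Finset.sum_add_distrib]
  exact Finset.sum_congr rfl fun a _ => pointwise_bias_decomposition _ _ _ _ _ _ (hω a)

theorem integral_sum_inner_condH_smul_eq (hm : m ≤ mΩ) (hA : Measurable A)
    {φ φh : α → α → Ω → EuclideanSpace ℝ (Fin n)} {x : α → Ω → EuclideanSpace ℝ (Fin n)}
    (hφ0 : ∀ a, ∀ᵐ ω ∂μ, ∑ a', condH μ m A a' ω • φ a' a ω = 0)
    (hφ : ∀ a' a, Measurable[m] (φ a' a)) (hφ' : ∀ a' a, MemLp (φ a' a) ∞ μ)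
    (hφh : ∀ a' a, Measurable[m] (φh a' a)) (hφh' : ∀ a' a, MemLp (φh a' a) ∞ μ)
    (hx : ∀ a, Measurable[m] (x a)) (hx' : ∀ a, MemLp (x a) ∞ μ) :
    ∫ ω, ∑ a, ⟪∑ a', condH μ m A a' ω • φh a' a ω, x a ω⟫ ∂μ
      = ∫ ω, ∑ a, ⟪φh (A ω) a ω - φ (A ω) a ω, x a ω⟫ ∂μ := by
  refine (integral_congr_ae ?_).trans (integral_comp_treatment hm hA
    (f := fun a' ω => ∑ a, ⟪φh a' a ω - φ a' a ω, x a ω⟫)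
    (fun a' => Finset.measurable_sum _ fun a _ => ((hφh a' a).sub (hφ a' a)).inner (hx a))
    (fun a' => memLp_finsetSum _ fun a _ =>
      ((hφh' a' a).sub (hφ' a' a)).inner (r := ∞) (hx' a))).symm
  filter_upwards [ae_all_iff.2 hφ0] with ω hω
  have hφh_sub a : ∑ a', condH μ m A a' ω • φh a' a ω
      = ∑ a', condH μ m A a' ω • (φh a' a ω - φ a' a ω) := by
    simp only [smul_sub, Finset.sum_sub_distrib, hω a, sub_zero]
  simp only [hφh_sub, sum_inner, real_inner_smul_left, Finset.mul_sum]
  exact Finset.sum_comm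

end Treatment

/-- (Quantitative bias bound underlying Theorem 2.)
In the setting of the bias decomposition, if in addition `‖G(a)‖ ≤ B` and
`‖ŵ(a)‖ ≤ C_w` almost everywhere, then
`|E[φ̂_unc] − Ψ(w)|
  ≤ B·E[∑_a ‖ŵ(a) − w(a) + ∑_{a'} H(a')·φ̂(a',a)‖]
  + (C_w/c)·√(E[∑_a ‖Ĝ(a) − G(a)‖²])·√(E[∑_a |Ĥ(a) − H(a)|²])
  + √(E[∑_a ‖φ̂(A,a) − φ(A,a)‖²])·√(E[∑_a ‖Ĝ(a) − G(a)‖²])`. -/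
theorem stmt4 {Ω : Type*} {mΩ : MeasurableSpace Ω}
    (μ : Measure Ω) [IsProbabilityMeasure μ]
    (m : MeasurableSpace Ω) (hm : m ≤ mΩ)
    {α : Type*} [Fintype α] [DecidableEq α] [MeasurableSpace α] [MeasurableSingletonClass α]
    {n : ℕ}
    (A : Ω → α) (hA : Measurable[mΩ] A)
    (Y : Ω → EuclideanSpace ℝ (Fin n)) (hY : Measurable[mΩ] Y)
    (CY : ℝ) (hYb : ∀ ω, ‖Y ω‖ ≤ CY)
    -- positivity of the cluster-level treatment probability
    (c : ℝ) (hc : 0 < c)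
    (hH : ∀ a : α, ∀ᵐ ω ∂μ, c ≤ condH μ m A a ω)
    -- bounded m-measurable weight functions
    (w : α → Ω → EuclideanSpace ℝ (Fin n)) (hw : ∀ a, Measurable[m] (w a))
    (Cw' : ℝ) (hwb : ∀ a ω, ‖w a ω‖ ≤ Cw')
    -- bounded m-measurable influence functions of the weights, with conditional mean zero
    (φ : α → α → Ω → EuclideanSpace ℝ (Fin n)) (hφ : ∀ a' a, Measurable[m] (φ a' a))
    (Cφ : ℝ) (hφb : ∀ a' a ω, ‖φ a' a ω‖ ≤ Cφ)
    (hφ0 : ∀ a : α, ∀ᵐ ω ∂μ, ∑ a', condH μ m A a' ω • φ a' a ω = 0)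
    -- fixed bounded m-measurable nuisance estimates
    (Gh : α → Ω → EuclideanSpace ℝ (Fin n)) (hGh : ∀ a, Measurable[m] (Gh a))
    (CG : ℝ) (hGhb : ∀ a ω, ‖Gh a ω‖ ≤ CG)
    (Hh : α → Ω → ℝ) (hHh : ∀ a, Measurable[m] (Hh a))
    (hHhc : ∀ a : α, ∀ᵐ ω ∂μ, c ≤ Hh a ω) (hHhb : ∀ a ω, Hh a ω ≤ 1)
    (wh : α → Ω → EuclideanSpace ℝ (Fin n)) (hwh : ∀ a, Measurable[m] (wh a))
    (φh : α → α → Ω → EuclideanSpace ℝ (Fin n)) (hφh : ∀ a' a, Measurable[m] (φh a' a))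
    (Cφh : ℝ) (hφhb : ∀ a' a ω, ‖φh a' a ω‖ ≤ Cφh)
    -- additional a.e. bounds on the outcome regression and the estimated weights
    (B : ℝ) (hGB : ∀ a : α, ∀ᵐ ω ∂μ, ‖condG μ m A Y a ω‖ ≤ B)
    (Cw : ℝ) (hwhB : ∀ a : α, ∀ᵐ ω ∂μ, ‖wh a ω‖ ≤ Cw) :
    |(∫ ω, ((∑ a, ⟪wh a ω + φh (A ω) a ω, Gh a ω⟫)
          + ⟪wh (A ω) ω, Y ω - Gh (A ω) ω⟫ / Hh (A ω) ω) ∂μ)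
        - ∫ ω, ∑ a, ⟪w a ω, condG μ m A Y a ω⟫ ∂μ|
      ≤ B * (∫ ω, ∑ a,
            ‖wh a ω - w a ω + ∑ a', condH μ m A a' ω • φh a' a ω‖ ∂μ)
        + (Cw / c) *
            Real.sqrt (∫ ω, ∑ a, ‖Gh a ω - condG μ m A Y a ω‖ ^ 2 ∂μ) *
            Real.sqrt (∫ ω, ∑ a, |Hh a ω - condH μ m A a ω| ^ 2 ∂μ)
        + Real.sqrt (∫ ω, ∑ a, ‖φh (A ω) a ω - φ (A ω) a ω‖ ^ 2 ∂μ) *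
            Real.sqrt (∫ ω, ∑ a, ‖Gh a ω - condG μ m A Y a ω‖ ^ 2 ∂μ) := by
  have hY' := memLp_top_of_bound hY.aestronglyMeasurable CY (ae_of_all μ hYb)
  have hw' a := memLp_top_of_measurable_of_ae_le hm (hw a) (ae_of_all μ (hwb a))
  have hφ' a' a := memLp_top_of_measurable_of_ae_le hm (hφ a' a) (ae_of_all μ (hφb a' a))
  have hGh' a := memLp_top_of_measurable_of_ae_le hm (hGh a) (ae_of_all μ (hGhb a))
  have hφh' a' a := memLp_top_of_measurable_of_ae_le hm (hφh a' a) (ae_of_all μ (hφhb a' a))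
  have hwh' a := memLp_top_of_measurable_of_ae_le hm (hwh a) (hwhB a)
  have hG' a := memLp_top_of_measurable_of_ae_le hm (measurable_condG Y a) (hGB a)
  have hHh' a : MemLp (Hh a) ∞ μ := memLp_top_of_measurable_of_ae_le hm (hHh a) (C := 1)
    ((hHhc a).mono fun ω h => abs_le.2 ⟨by linarith, hHhb a ω⟩)
  have hHhinv a : MemLp (fun ω => (Hh a ω)⁻¹) ∞ μ :=
    memLp_top_of_measurable_of_ae_le hm (hHh a).inv (C := c⁻¹) ((hHhc a).mono
      fun ω h => by rw [norm_inv, Real.norm_of_nonneg (hc.le.trans h)]; exact inv_anti₀ hc h)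
  have hGhG a : Measurable[m] (fun ω => Gh a ω - condG μ m A Y a ω) :=
    (hGh a).sub (measurable_condG Y a)
  have hGhG' a : MemLp (fun ω => Gh a ω - condG μ m A Y a ω) ∞ μ := (hGh' a).sub (hG' a)
  rw [integral_estimator_sub_integral_target_eq hm hA hY'
      (fun a => (hH a).mono fun ω h => (hc.trans_le h).ne') hG' hw' hGh hGh' hwh hwh' hφh hφh'
      hHh hHh' hHhinv (fun a => (hHhc a).mono fun ω h => (hc.trans_le h).ne'),
    integral_sum_inner_condH_smul_eq hm hA hφ0 hφ hφ' hφh hφh' hGhG hGhG']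
  refine (abs_add_le _ _).trans (add_le_add ((abs_add_le _ _).trans (add_le_add ?_ ?_)) ?_)
  · exact abs_integral_sum_inner_le_mul_integral (fun a => (((hwh' a).sub (hw' a)).add
      (memLp_finsetSum _ fun a' _ => (hφh' a' a).smul (memLp_top_condH hA a'))).integrable le_top)
      hGB
  · exact abs_integral_sum_div_mul_inner_le hc hHhc hwhB (fun a => (hGhG' a).mono_exponent le_top)
      fun a => ((hHh' a).sub (memLp_top_condH hA a)).mono_exponent le_top
  · exact abs_integral_sum_inner_le
      (fun a => (memLp_comp_treatment hA fun a' => (hφh' a' a).sub (hφ' a' a)).mono_exponent le_top)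
      fun a => (hGhG' a).mono_exponent le_top
end

section
/- (Population double robustness for a known policy, Section 4.1, type B.) Suppose the weight functions w(a) are known (ŵ = w) and the weight functions do not depend on the data distribution (φ = φ̂ = 0), so that the plug-in influence-function functional is φ̂_unc := ∑_{a∈α} ⟨w(a), Ĝ(a)⟩ + ⟨w(A), Y − Ĝ(A)⟩ / Ĥ(A). If either Ĝ(a) = G(a) μ-a.e. for all a ∈ α, or Ĥ(a) = H(a) μ-a.e. for all a ∈ α, then E[φ̂_unc] = Ψ(w). -/
open MeasureTheory RealInnerProductSpace

/-! For each treatment value `a`, write `χ = 1_{A=a}`, `H = μ[χ|m]`, `V = μ[χ • Y|m]`, so that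
`G a = H⁻¹ • V`. The weight `Ĥ a⁻¹ • w a` and the estimate `Ĝ a` are `m`-measurable, so
conditioning the correction term `⟪Ĥ a⁻¹ • w a, χ • (Y - Ĝ a)⟫` on `m` replaces `χ • (Y - Ĝ a)`
by `V - H • Ĝ a`. The `a`-th summand then has the same expectation as
`⟪w a, Ĝ a⟫ + (H / Ĥ a) ⟪w a, G a - Ĝ a⟫`, which equals `⟪w a, G a⟫` as soon as `Ĝ a = G a` or
`Ĥ a = H`. -/

lemma inner_add_inner_inv_smul_sub_eq {E : Type*} [NormedAddCommGroup E] [InnerProductSpace ℝ E]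
    {w g v : E} {h ĥ : ℝ} (hh : h ≠ 0) (hDR : g = h⁻¹ • v ∨ ĥ = h) :
    ⟪w, g⟫ + ⟪ĥ⁻¹ • w, v - h • g⟫ = ⟪w, h⁻¹ • v⟫ := by
  rcases hDR with rfl | rfl
  · rw [smul_inv_smul₀ hh, sub_self, inner_zero_right, add_zero]
  · rw [inner_sub_right, real_inner_smul_left, real_inner_smul_left, real_inner_smul_right,
      real_inner_smul_right, inv_mul_cancel_left₀ hh]
    ring

lemma inner_div_eq_sum_inner_ite_smul {α E : Type*} [Fintype α] [DecidableEq α]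
    [NormedAddCommGroup E] [InnerProductSpace ℝ E] (a₀ : α) (u v : α → E) (h : α → ℝ) :
    ⟪u a₀, v a₀⟫ / h a₀ = ∑ a, ⟪(h a)⁻¹ • u a, (if a₀ = a then (1 : ℝ) else 0) • v a⟫ := by
  simp [ite_smul, real_inner_smul_left, div_eq_inv_mul, apply_ite (inner ℝ _)]

section InnerCondExp

variable {Ω E : Type*} {m mΩ : MeasurableSpace Ω} {μ : Measure Ω}
  [NormedAddCommGroup E] [InnerProductSpace ℝ E]

lemma integrable_inner_of_norm_le_left {ψ f : Ω → E} (C : ℝ) (hψ : AEStronglyMeasurable ψ μ)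
    (hψC : ∀ᵐ ω ∂μ, ‖ψ ω‖ ≤ C) (hf : Integrable f μ) :
    Integrable (fun ω => ⟪ψ ω, f ω⟫) μ :=
  (innerSL ℝ).integrable_of_bilin_of_bdd_left C hψ hψC hf

lemma ae_norm_inv_smul_le_div {h : Ω → ℝ} {w : Ω → E} {c C : ℝ} (hc : 0 < c)
    (hh : ∀ᵐ ω ∂μ, c ≤ h ω) (hw : ∀ ω, ‖w ω‖ ≤ C) :
    ∀ᵐ ω ∂μ, ‖(h ω)⁻¹ • w ω‖ ≤ C / c := by
  filter_upwards [hh] with ω hω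
  rw [norm_smul, norm_inv, Real.norm_of_nonneg (hc.le.trans hω), ← div_eq_inv_mul]
  exact div_le_div₀ ((norm_nonneg _).trans (hw ω)) (hw ω) hc hω

variable [CompleteSpace E]

lemma integral_inner_condExp_right (hm : m ≤ mΩ) [SigmaFinite (μ.trim hm)] {ψ f : Ω → E}
    (hψ : StronglyMeasurable[m] ψ) (hψf : Integrable (fun ω => ⟪ψ ω, f ω⟫) μ)
    (hf : Integrable f μ) :
    ∫ ω, ⟪ψ ω, f ω⟫ ∂μ = ∫ ω, ⟪ψ ω, (μ[f|m]) ω⟫ ∂μ := by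
  rw [← integral_condExp hm]
  exact integral_congr_ae (condExp_bilin_of_stronglyMeasurable_left (innerSL ℝ) hψ hψf hf)

lemma condExp_smul_sub_ae_eq {χ : Ω → ℝ} {Y g : Ω → E} (hg : StronglyMeasurable[m] g)
    (hχ : Integrable χ μ) (hχY : Integrable (χ • Y) μ) (hχg : Integrable (χ • g) μ) :
    μ[χ • (Y - g)|m] =ᵐ[μ] μ[χ • Y|m] - μ[χ|m] • g := by
  rw [smul_sub]
  filter_upwards [condExp_sub hχY hχg m,
    condExp_smul_of_aestronglyMeasurable_right hχ hχg hg.aestronglyMeasurable] with ω h₁ h₂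
  rw [h₁, Pi.sub_apply, Pi.sub_apply, h₂]

lemma integral_inner_add_inner_correction_eq (hm : m ≤ mΩ) [SigmaFinite (μ.trim hm)]
    {χ ĥ : Ω → ℝ} {Y w g : Ω → E} {C : ℝ}
    (hχ : Integrable χ μ) (hχY : Integrable (χ • Y) μ) (hχg : Integrable (χ • g) μ)
    (hg : StronglyMeasurable[m] g) (hwg : Integrable (fun ω => ⟪w ω, g ω⟫) μ)
    (hψ : StronglyMeasurable[m] fun ω => (ĥ ω)⁻¹ • w ω)
    (hψC : ∀ᵐ ω ∂μ, ‖(ĥ ω)⁻¹ • w ω‖ ≤ C) (hH : ∀ᵐ ω ∂μ, (μ[χ|m]) ω ≠ 0)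
    (hDR : g =ᵐ[μ] (fun ω => ((μ[χ|m]) ω)⁻¹ • (μ[χ • Y|m]) ω) ∨ ĥ =ᵐ[μ] μ[χ|m]) :
    ∫ ω, (⟪w ω, g ω⟫ + ⟪(ĥ ω)⁻¹ • w ω, χ ω • (Y ω - g ω)⟫) ∂μ
      = ∫ ω, ⟪w ω, ((μ[χ|m]) ω)⁻¹ • (μ[χ • Y|m]) ω⟫ ∂μ := by
  have hcorr : Integrable (χ • (Y - g)) μ := by rw [smul_sub]; exact hχY.sub hχg
  have hψm := (hψ.mono hm).aestronglyMeasurable (μ := μ)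
  have hDR' : ∀ᵐ ω ∂μ, g ω = ((μ[χ|m]) ω)⁻¹ • (μ[χ • Y|m]) ω ∨ ĥ ω = (μ[χ|m]) ω :=
    hDR.elim (fun h => h.mono fun _ => Or.inl) (fun h => h.mono fun _ => Or.inr)
  calc ∫ ω, (⟪w ω, g ω⟫ + ⟪(ĥ ω)⁻¹ • w ω, (χ • (Y - g)) ω⟫) ∂μ
      = ∫ ω, (⟪w ω, g ω⟫ + ⟪(ĥ ω)⁻¹ • w ω, (μ[χ • (Y - g)|m]) ω⟫) ∂μ := by
        have hψcorr := integrable_inner_of_norm_le_left C hψm hψC hcorr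
        rw [integral_add hwg hψcorr, integral_inner_condExp_right hm hψ hψcorr hcorr,
          integral_add hwg (integrable_inner_of_norm_le_left C hψm hψC integrable_condExp)]
    _ = _ := integral_congr_ae <| by
        filter_upwards [condExp_smul_sub_ae_eq hg hχ hχY hχg, hH, hDR'] with ω hω hHω hDRω
        rw [hω]
        exact inner_add_inner_inv_smul_sub_eq hHω hDRω

end InnerCondExp

section ClusterModel

variable {Ω α : Type*} {m mΩ : MeasurableSpace Ω} {μ : Measure Ω} [DecidableEq α] {n : ℕ}
  {A : Ω → α} {Y w g : Ω → EuclideanSpace ℝ (Fin n)} {ĥ : Ω → ℝ} {c Cw CG : ℝ}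

lemma integrable_ite_smul [MeasurableSpace α] [MeasurableSingletonClass α]
    {E : Type*} [NormedAddCommGroup E] [NormedSpace ℝ E] (hA : Measurable A) (a : α)
    {f : Ω → E} (hf : Integrable f μ) :
    Integrable (fun ω => (if A ω = a then (1 : ℝ) else 0) • f ω) μ :=
  hf.bdd_smul 1 (Measurable.ite (hA (measurableSet_singleton a)) measurable_const
    measurable_const).aestronglyMeasurable (ae_of_all _ fun ω => by split_ifs <;> simp)

lemma integrable_inner_condG (hm : m ≤ mΩ) (a : α) (hc : 0 < c)
    (hH : ∀ᵐ ω ∂μ, c ≤ condH μ m A a ω) (hw : Measurable[m] w) (hwb : ∀ ω, ‖w ω‖ ≤ Cw) :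
    Integrable (fun ω => ⟪w ω, condG μ m A Y a ω⟫) μ := by
  have hH_meas : Measurable (condH μ m A a) := (stronglyMeasurable_condExp.mono hm).measurable
  refine (integrable_inner_of_norm_le_left (ψ := fun ω => (condH μ m A a ω)⁻¹ • w ω) (Cw / c)
    (hH_meas.inv.smul (hw.mono hm le_rfl)).aestronglyMeasurable
    (ae_norm_inv_smul_le_div hc hH hwb)
    (integrable_condExp (m := m) (f := fun ω => (if A ω = a then (1 : ℝ) else 0) • Y ω))).congr
    (ae_of_all _ fun ω => ?_)
  simp only [condG, real_inner_smul_left, real_inner_smul_right]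

lemma integrable_aipw_term [IsFiniteMeasure μ] [MeasurableSpace α]
    [MeasurableSingletonClass α] (hm : m ≤ mΩ) (a : α) (hA : Measurable A) (hY : Integrable Y μ)
    (hc : 0 < c) (hw : Measurable[m] w) (hwb : ∀ ω, ‖w ω‖ ≤ Cw)
    (hg : Measurable[m] g) (hgb : ∀ ω, ‖g ω‖ ≤ CG)
    (hĥ : Measurable[m] ĥ) (hĥc : ∀ᵐ ω ∂μ, c ≤ ĥ ω) :
    Integrable (fun ω => ⟪w ω, g ω⟫
      + ⟪(ĥ ω)⁻¹ • w ω, (if A ω = a then (1 : ℝ) else 0) • (Y ω - g ω)⟫) μ := by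
  have hg_int : Integrable g μ :=
    .of_bound (hg.mono hm le_rfl).aestronglyMeasurable CG (ae_of_all _ hgb)
  exact (integrable_inner_of_norm_le_left Cw (hw.mono hm le_rfl).aestronglyMeasurable
    (ae_of_all _ hwb) hg_int).add (integrable_inner_of_norm_le_left (Cw / c)
    ((hĥ.inv.smul hw).mono hm le_rfl).aestronglyMeasurable (ae_norm_inv_smul_le_div hc hĥc hwb)
    (integrable_ite_smul hA a (hY.sub hg_int)))

lemma integral_aipw_term_eq [IsFiniteMeasure μ] [MeasurableSpace α]
    [MeasurableSingletonClass α] (hm : m ≤ mΩ) (a : α) (hA : Measurable A) (hY : Integrable Y μ)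
    (hc : 0 < c) (hH : ∀ᵐ ω ∂μ, c ≤ condH μ m A a ω)
    (hw : Measurable[m] w) (hwb : ∀ ω, ‖w ω‖ ≤ Cw)
    (hg : Measurable[m] g) (hgb : ∀ ω, ‖g ω‖ ≤ CG)
    (hĥ : Measurable[m] ĥ) (hĥc : ∀ᵐ ω ∂μ, c ≤ ĥ ω)
    (hDR : g =ᵐ[μ] condG μ m A Y a ∨ ĥ =ᵐ[μ] condH μ m A a) :
    ∫ ω, (⟪w ω, g ω⟫
      + ⟪(ĥ ω)⁻¹ • w ω, (if A ω = a then (1 : ℝ) else 0) • (Y ω - g ω)⟫) ∂μ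
      = ∫ ω, ⟪w ω, condG μ m A Y a ω⟫ ∂μ := by
  have hg_int : Integrable g μ :=
    .of_bound (hg.mono hm le_rfl).aestronglyMeasurable CG (ae_of_all _ hgb)
  have hχ_meas : Measurable fun ω => if A ω = a then (1 : ℝ) else 0 :=
    Measurable.ite (hA (measurableSet_singleton a)) measurable_const measurable_const
  exact integral_inner_add_inner_correction_eq hm
    (.of_bound hχ_meas.aestronglyMeasurable 1 (ae_of_all _ fun ω => by split_ifs <;> simp))
    (integrable_ite_smul hA a hY) (integrable_ite_smul hA a hg_int) hg.stronglyMeasurable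
    (integrable_inner_of_norm_le_left Cw (hw.mono hm le_rfl).aestronglyMeasurable
      (ae_of_all _ hwb) hg_int)
    (hĥ.inv.smul hw).stronglyMeasurable (ae_norm_inv_smul_le_div hc hĥc hwb)
    (hH.mono fun ω h => (hc.trans_le h).ne') hDR

end ClusterModel

theorem stmt5_general {Ω : Type*} {mΩ : MeasurableSpace Ω}
    (μ : Measure Ω) [IsProbabilityMeasure μ]
    (m : MeasurableSpace Ω) (hm : m ≤ mΩ)
    {α : Type*} [Fintype α] [DecidableEq α] [MeasurableSpace α] [MeasurableSingletonClass α]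
    {n : ℕ}
    (A : Ω → α) (hA : Measurable[mΩ] A)
    (Y : Ω → EuclideanSpace ℝ (Fin n)) (hY : Measurable[mΩ] Y)
    (CY : ℝ) (hYb : ∀ ω, ‖Y ω‖ ≤ CY)
    -- positivity of the cluster-level treatment probability
    (c : ℝ) (hc : 0 < c)
    (hH : ∀ a : α, ∀ᵐ ω ∂μ, c ≤ condH μ m A a ω)
    -- bounded m-measurable weight functions
    (w : α → Ω → EuclideanSpace ℝ (Fin n)) (hw : ∀ a, Measurable[m] (w a))
    (Cw : ℝ) (hwb : ∀ a ω, ‖w a ω‖ ≤ Cw)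
    -- fixed bounded m-measurable nuisance estimates
    (Gh : α → Ω → EuclideanSpace ℝ (Fin n)) (hGh : ∀ a, Measurable[m] (Gh a))
    (CG : ℝ) (hGhb : ∀ a ω, ‖Gh a ω‖ ≤ CG)
    (Hh : α → Ω → ℝ) (hHh : ∀ a, Measurable[m] (Hh a))
    (hHhc : ∀ a : α, ∀ᵐ ω ∂μ, c ≤ Hh a ω)
    -- double robustness: either the outcome regression or the treatment
    -- probability is consistently estimated
    (hDR : (∀ a : α, Gh a =ᵐ[μ] condG μ m A Y a)
        ∨ (∀ a : α, Hh a =ᵐ[μ] condH μ m A a)) :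
    ∫ ω, ((∑ a, ⟪w a ω, Gh a ω⟫)
        + ⟪w (A ω) ω, Y ω - Gh (A ω) ω⟫ / Hh (A ω) ω) ∂μ
      = ∫ ω, ∑ a, ⟪w a ω, condG μ m A Y a ω⟫ ∂μ := by
  have hY_int : Integrable Y μ := .of_bound hY.aestronglyMeasurable CY (ae_of_all _ hYb)
  have hsel (ω : Ω) : ⟪w (A ω) ω, Y ω - Gh (A ω) ω⟫ / Hh (A ω) ω
      = ∑ a, ⟪(Hh a ω)⁻¹ • w a ω, (if A ω = a then (1 : ℝ) else 0) • (Y ω - Gh a ω)⟫ :=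
    inner_div_eq_sum_inner_ite_smul (A ω) (w · ω) (Y ω - Gh · ω) (Hh · ω)
  simp_rw [hsel, ← Finset.sum_add_distrib]
  rw [integral_finsetSum _ fun a _ => integrable_aipw_term hm a hA hY_int hc (hw a) (hwb a)
      (hGh a) (hGhb a) (hHh a) (hHhc a),
    integral_finsetSum _ fun a _ => integrable_inner_condG hm a hc (hH a) (hw a) (hwb a)]
  exact Finset.sum_congr rfl fun a _ => integral_aipw_term_eq hm a hA hY_int hc (hH a) (hw a)
    (hwb a) (hGh a) (hGhb a) (hHh a) (hHhc a) (hDR.imp (· a) (· a))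

/-- (Population double robustness for a known policy, Section 4.1, type B.)
For known weight functions (`ŵ = w`, `φ = φ̂ = 0`), the plug-in
influence-function functional
`φ̂_unc = ∑_a ⟨w(a), Ĝ(a)⟩ + ⟨w(A), Y − Ĝ(A)⟩/Ĥ(A)` satisfies
`E[φ̂_unc] = Ψ(w)` as soon as either `Ĝ(a) = G(a)` a.e. for all `a`, or
`Ĥ(a) = H(a)` a.e. for all `a`. -/
theorem stmt5 {Ω : Type*} {mΩ : MeasurableSpace Ω}
    (μ : Measure Ω) [IsProbabilityMeasure μ]
    (m : MeasurableSpace Ω) (hm : m ≤ mΩ)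
    {α : Type*} [Fintype α] [DecidableEq α] [MeasurableSpace α] [MeasurableSingletonClass α]
    {n : ℕ}
    (A : Ω → α) (hA : Measurable[mΩ] A)
    (Y : Ω → EuclideanSpace ℝ (Fin n)) (hY : Measurable[mΩ] Y)
    (CY : ℝ) (hYb : ∀ ω, ‖Y ω‖ ≤ CY)
    -- positivity of the cluster-level treatment probability
    (c : ℝ) (hc : 0 < c)
    (hH : ∀ a : α, ∀ᵐ ω ∂μ, c ≤ condH μ m A a ω)
    -- bounded m-measurable weight functions
    (w : α → Ω → EuclideanSpace ℝ (Fin n)) (hw : ∀ a, Measurable[m] (w a))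
    (Cw : ℝ) (hwb : ∀ a ω, ‖w a ω‖ ≤ Cw)
    -- fixed bounded m-measurable nuisance estimates
    (Gh : α → Ω → EuclideanSpace ℝ (Fin n)) (hGh : ∀ a, Measurable[m] (Gh a))
    (CG : ℝ) (hGhb : ∀ a ω, ‖Gh a ω‖ ≤ CG)
    (Hh : α → Ω → ℝ) (hHh : ∀ a, Measurable[m] (Hh a))
    (hHhc : ∀ a : α, ∀ᵐ ω ∂μ, c ≤ Hh a ω) (hHhb : ∀ a ω, Hh a ω ≤ 1)
    -- double robustness: either the outcome regression or the treatment
    -- probability is consistently estimated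
    (hDR : (∀ a : α, Gh a =ᵐ[μ] condG μ m A Y a)
        ∨ (∀ a : α, Hh a =ᵐ[μ] condH μ m A a)) :
    ∫ ω, ((∑ a, ⟪w a ω, Gh a ω⟫)
        + ⟪w (A ω) ω, Y ω - Gh (A ω) ω⟫ / Hh (A ω) ω) ∂μ
      = ∫ ω, ∑ a, ⟪w a ω, condG μ m A Y a ω⟫ ∂μ :=
  stmt5_general μ m hm A hA Y hY CY hYb c hc hH w hw Cw hwb Gh hGh CG hGhb Hh hHh hHhc hDR
end

section
/- (Second-order product expansion bound, the multilinear von Mises remainder used in Section B.2.) Let n ≥ 1 and let a_1,…,a_n, b_1,…,b_n ∈ [0, 1]. Then |∏_{i=1}^n a_i − ∏_{i=1}^n b_i − ∑_{l=1}^n (∏_{i≠l} a_i)·(a_l − b_l)| ≤ 2^n · ∑_{i=1}^n (a_i − b_i)². -/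
/-!
Write `R(s)` for the remainder of the first-order expansion of `∏_{i ∈ s} a_i` around `b`.
Adding an index `x` gives `R(s ∪ {x}) = b_x R(s) - (a_x - b_x) S(s)`, where `S(s)` is the
first-order term, and `|S(s)| ≤ ∑_{l ∈ s} |a_l - b_l|` because all factors have modulus at
most one. Induction then gives `|R(s)| ≤ (∑_{l ∈ s} |a_l - b_l|)² / 2`, and Cauchy–Schwarz
turns this into `|s| / 2 · ∑ (a_l - b_l)²`, which is at most `2^|s| ∑ (a_l - b_l)²`.
-/

open Finset

variable {ι : Type*} [DecidableEq ι]

noncomputable def prodFirstOrderTerm (a b : ι → ℝ) (s : Finset ι) : ℝ :=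
  ∑ l ∈ s, (∏ i ∈ s.erase l, a i) * (a l - b l)

noncomputable def prodFirstOrderRemainder (a b : ι → ℝ) (s : Finset ι) : ℝ :=
  (∏ i ∈ s, a i) - (∏ i ∈ s, b i) - prodFirstOrderTerm a b s

lemma prodFirstOrderTerm_insert (a b : ι → ℝ) {s : Finset ι} {x : ι} (hx : x ∉ s) :
    prodFirstOrderTerm a b (insert x s) =
      (∏ i ∈ s, a i) * (a x - b x) + a x * prodFirstOrderTerm a b s := by
  rw [prodFirstOrderTerm, sum_insert hx, erase_insert hx, prodFirstOrderTerm, mul_sum]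
  congr 1
  refine sum_congr rfl fun l hl => ?_
  have hxl : x ≠ l := fun h => hx (h ▸ hl)
  rw [erase_insert_of_ne hxl, prod_insert fun h => hx (mem_of_mem_erase h)]
  ring

lemma prodFirstOrderRemainder_insert (a b : ι → ℝ) {s : Finset ι} {x : ι} (hx : x ∉ s) :
    prodFirstOrderRemainder a b (insert x s) =
      b x * prodFirstOrderRemainder a b s - (a x - b x) * prodFirstOrderTerm a b s := by
  simp only [prodFirstOrderRemainder, prodFirstOrderTerm_insert a b hx, prod_insert hx]
  ring

lemma abs_prodFirstOrderTerm_le (a b : ι → ℝ) (ha : ∀ i, |a i| ≤ 1) (s : Finset ι) :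
    |prodFirstOrderTerm a b s| ≤ ∑ l ∈ s, |a l - b l| := by
  refine (abs_sum_le_sum_abs _ _).trans (sum_le_sum fun l _ => ?_)
  have hprod : |∏ i ∈ s.erase l, a i| ≤ 1 := by
    rw [abs_prod]
    exact prod_le_one (fun i _ => abs_nonneg _) fun i _ => ha i
  rw [abs_mul]
  exact mul_le_of_le_one_left (abs_nonneg _) hprod

lemma abs_prodFirstOrderRemainder_le (a b : ι → ℝ) (ha : ∀ i, |a i| ≤ 1)
    (hb : ∀ i, |b i| ≤ 1) (s : Finset ι) :
    |prodFirstOrderRemainder a b s| ≤ (∑ l ∈ s, |a l - b l|) ^ 2 / 2 := by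
  induction s using Finset.induction_on with
  | empty => simp [prodFirstOrderRemainder, prodFirstOrderTerm]
  | @insert x s hx ih =>
    set D := ∑ l ∈ s, |a l - b l|
    have hbR : |b x * prodFirstOrderRemainder a b s| ≤ D ^ 2 / 2 := by
      rw [abs_mul]
      exact (mul_le_of_le_one_left (abs_nonneg _) (hb x)).trans ih
    have hdS : |(a x - b x) * prodFirstOrderTerm a b s| ≤ |a x - b x| * D := by
      rw [abs_mul]
      exact mul_le_mul_of_nonneg_left (abs_prodFirstOrderTerm_le a b ha s) (abs_nonneg _)
    calc |prodFirstOrderRemainder a b (insert x s)|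
        ≤ D ^ 2 / 2 + |a x - b x| * D := by
          rw [prodFirstOrderRemainder_insert a b hx]
          exact (abs_sub _ _).trans (add_le_add hbR hdS)
      _ ≤ (|a x - b x| + D) ^ 2 / 2 := by nlinarith [sq_nonneg (a x - b x), sq_abs (a x - b x)]
      _ = (∑ l ∈ insert x s, |a l - b l|) ^ 2 / 2 := by rw [sum_insert hx]

lemma abs_prodFirstOrderRemainder_le_two_pow_mul (a b : ι → ℝ) (ha : ∀ i, |a i| ≤ 1)
    (hb : ∀ i, |b i| ≤ 1) (s : Finset ι) :
    |prodFirstOrderRemainder a b s| ≤ 2 ^ #s * ∑ i ∈ s, (a i - b i) ^ 2 := by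
  have hCS : (∑ l ∈ s, |a l - b l|) ^ 2 ≤ #s * ∑ i ∈ s, (a i - b i) ^ 2 := by
    simpa only [sq_abs] using sq_sum_le_card_mul_sum_sq (s := s) (f := fun l => |a l - b l|)
  have hcard : (#s : ℝ) ≤ 2 ^ #s := by exact_mod_cast (Nat.lt_two_pow_self).le
  have hsq : 0 ≤ ∑ i ∈ s, (a i - b i) ^ 2 := sum_nonneg fun i _ => sq_nonneg _
  calc |prodFirstOrderRemainder a b s| ≤ (∑ l ∈ s, |a l - b l|) ^ 2 / 2 :=
        abs_prodFirstOrderRemainder_le a b ha hb s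
    _ ≤ 2 ^ #s * ∑ i ∈ s, (a i - b i) ^ 2 := by nlinarith

theorem stmt8_general (n : ℕ) (a b : Fin n → ℝ)
    (ha : ∀ i, a i ∈ Set.Icc (0:ℝ) 1) (hb : ∀ i, b i ∈ Set.Icc (0:ℝ) 1) :
    |(∏ i, a i) - (∏ i, b i) -
        ∑ l, (∏ i ∈ Finset.univ.erase l, a i) * (a l - b l)|
      ≤ 2 ^ n * ∑ i, (a i - b i) ^ 2 := by
  have habs {c : Fin n → ℝ} (hc : ∀ i, c i ∈ Set.Icc (0:ℝ) 1) (i : Fin n) : |c i| ≤ 1 :=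
    abs_le.mpr ⟨by linarith [(hc i).1], (hc i).2⟩
  simpa [prodFirstOrderRemainder, prodFirstOrderTerm] using
    abs_prodFirstOrderRemainder_le_two_pow_mul a b (habs ha) (habs hb) univ

/-- (Second-order product expansion bound, the multilinear von Mises remainder, Section B.2.)
For `a_i, b_i ∈ [0,1]`,
`|∏ a_i − ∏ b_i − ∑_l (∏_{i≠l} a_i)(a_l − b_l)| ≤ 2^n · ∑ (a_i − b_i)²`. -/
theorem stmt8 (n : ℕ) (hn : 1 ≤ n) (a b : Fin n → ℝ)
    (ha : ∀ i, a i ∈ Set.Icc (0:ℝ) 1) (hb : ∀ i, b i ∈ Set.Icc (0:ℝ) 1) :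
    |(∏ i, a i) - (∏ i, b i) -
        ∑ l, (∏ i ∈ Finset.univ.erase l, a i) * (a l - b l)|
      ≤ 2 ^ n * ∑ i, (a i - b i) ^ 2 :=
  stmt8_general n a b ha hb
end

section
/- (Variance of the subsampling-approximated influence function, Theorem S2 of the supplement.) Let (Ω, F_Ω, μ) be a probability space, S a finite type, f : S → ℝ a probability mass function with f(s) > 0 for all s, and ν the measure on S with ν({s}) = f(s). Fix r ≥ 1 and let h : Ω × S → ℝ and l : Ω → ℝ be bounded measurable. On the product probability space Ω × S^r with measure μ ⊗ ν^{⊗r}, define W(ω, s) := (1/r)·∑_{q=1}^r h(ω, s_q)/f(s_q) + l(ω). Then Var(W) = Var_μ(ω ↦ ∑_{t∈S} h(ω, t) + l(ω)) + (1/r)·∫_Ω [∑_{t∈S} h(ω, t)²/f(t) − (∑_{t∈S} h(ω, t))²] dμ(ω). In particular, the variance of the subsampling-approximated estimator exceeds the variance of the exact functional ω ↦ ∑_{t} h(ω, t) + l(ω) by an additive term of order 1/r. -/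
/-!
Law of total variance on `Ω × S^r`: conditionally on `ω` the draws `s_q` are i.i.d. with law `ν`,
and the importance weight `h(ω, ·) / f` has mean `∑_t h(ω, t)` and variance
`∑_t h(ω, t)² / f(t) - (∑_t h(ω, t))²` under `ν`. Hence the conditional mean of `W` is the exact
functional `∑_t h(ω, t) + l(ω)`, and its conditional variance is that variance divided by `r`.
-/

open MeasureTheory ProbabilityTheory

section TotalVariance

variable {α β : Type*} [MeasurableSpace α] [MeasurableSpace β]
  {μ : Measure α} {ν : Measure β} [IsProbabilityMeasure μ] [IsProbabilityMeasure ν]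

theorem variance_prod_eq_variance_integral_add_integral_variance {W : α × β → ℝ}
    (hW : StronglyMeasurable W) {C : ℝ} (hWC : ∀ p, ‖W p‖ ≤ C) :
    Var[W; μ.prod ν] =
      Var[fun a ↦ ∫ b, W (a, b) ∂ν; μ] + ∫ a, Var[fun b ↦ W (a, b); ν] ∂μ := by
  have hW2 : MemLp W 2 (μ.prod ν) := .of_bound hW.aestronglyMeasurable C (ae_of_all _ hWC)
  have hsection (a : α) : MemLp (fun b ↦ W (a, b)) 2 ν :=
    .of_bound (hW.comp_measurable measurable_prodMk_left).aestronglyMeasurable C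
      (ae_of_all _ fun b ↦ hWC (a, b))
  have hmean : MemLp (fun a ↦ ∫ b, W (a, b) ∂ν) 2 μ :=
    .of_bound hW.integral_prod_right'.aestronglyMeasurable C <| ae_of_all _ fun a ↦ by
      simpa using norm_integral_le_of_norm_le_const (μ := ν) (ae_of_all _ fun b ↦ hWC (a, b))
  have hsq : Integrable (fun a ↦ ∫ b, W (a, b) ^ 2 ∂ν) μ :=
    hW2.integrable_sq.integral_prod_left
  simp_rw [variance_eq_sub hW2, variance_eq_sub hmean, variance_eq_sub (hsection _), Pi.pow_apply]
  rw [integral_sub hsq hmean.integrable_sq, integral_prod _ hW2.integrable_sq,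
    integral_prod _ (hW2.integrable one_le_two)]
  ring

end TotalVariance

section SampleMean

variable {α : Type*} [MeasurableSpace α] {ν : Measure α} [IsProbabilityMeasure ν] {r : ℕ}

theorem integral_sampleMean_pi (hr : r ≠ 0) {g : α → ℝ} (hg : Integrable g ν) :
    ∫ s, (1 / (r : ℝ)) * ∑ q, g (s q) ∂Measure.pi (fun _ : Fin r ↦ ν) = ∫ a, g a ∂ν := by
  rw [integral_const_mul, integral_finsetSum _ fun q _ ↦ integrable_comp_eval hg,
    Finset.sum_congr rfl fun q _ ↦
      integral_comp_eval (μ := fun _ : Fin r ↦ ν) (i := q) hg.aestronglyMeasurable]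
  simp [hr]

theorem variance_sampleMean_pi {g : α → ℝ} (hg : MemLp g 2 ν) :
    Var[fun s ↦ (1 / (r : ℝ)) * ∑ q, g (s q); Measure.pi (fun _ : Fin r ↦ ν)] =
      Var[g; ν] / r := by
  have hsum := variance_sum_pi (μ := fun _ : Fin r ↦ ν) (X := fun _ ↦ g) fun _ ↦ hg
  rw [variance_const_mul, ← Finset.sum_fn, hsum, Finset.sum_const, Finset.card_univ,
    Fintype.card_fin, nsmul_eq_mul]
  rcases eq_or_ne (r : ℝ) 0 with hr | hr
  · simp [hr]
  · field_simp

theorem abs_sampleMean_le (hr : r ≠ 0) {x : Fin r → ℝ} {B : ℝ} (hx : ∀ q, |x q| ≤ B) :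
    |(1 / (r : ℝ)) * ∑ q, x q| ≤ B := by
  have hr' : (0 : ℝ) < r := by positivity
  rw [abs_mul, abs_of_pos (by positivity), one_div_mul_eq_div, div_le_iff₀ hr', mul_comm]
  simpa using (Finset.abs_sum_le_sum_abs _ Finset.univ).trans (Finset.sum_le_sum fun q _ ↦ hx q)

end SampleMean

section ImportanceWeights

variable {S : Type*} [Fintype S] [MeasurableSpace S] [MeasurableSingletonClass S]
  {ν : Measure S} {f : S → ℝ}

theorem integral_eq_sum_mul_of_measure_singleton [IsFiniteMeasure ν] (hf : ∀ s, 0 ≤ f s)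
    (hν : ∀ s, ν {s} = ENNReal.ofReal (f s)) (φ : S → ℝ) :
    ∫ t, φ t ∂ν = ∑ t, f t * φ t := by
  rw [integral_fintype .of_finite]
  simp [measureReal_def, hν, hf]

variable (hf : ∀ s, 0 < f s) (hν : ∀ s, ν {s} = ENNReal.ofReal (f s))
include hf hν

theorem integral_div_density [IsFiniteMeasure ν] (g : S → ℝ) :
    ∫ t, g t / f t ∂ν = ∑ t, g t := by
  rw [integral_eq_sum_mul_of_measure_singleton (fun s ↦ (hf s).le) hν]
  exact Finset.sum_congr rfl fun t _ ↦ mul_div_cancel₀ _ (hf t).ne'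

theorem variance_div_density [IsProbabilityMeasure ν] (g : S → ℝ) :
    Var[fun t ↦ g t / f t; ν] = ∑ t, g t ^ 2 / f t - (∑ t, g t) ^ 2 := by
  rw [variance_eq_sub .of_discrete, integral_div_density hf hν]
  simp only [Pi.pow_apply, integral_eq_sum_mul_of_measure_singleton (fun s ↦ (hf s).le) hν]
  congr 1
  exact Finset.sum_congr rfl fun t _ ↦ by field_simp [(hf t).ne']

end ImportanceWeights

theorem stmt19_general {Ω : Type*} [MeasurableSpace Ω] (μ : Measure Ω) [IsProbabilityMeasure μ]
    {S : Type*} [Fintype S] [MeasurableSpace S] [MeasurableSingletonClass S]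
    (f : S → ℝ) (hf : ∀ s, 0 < f s)
    (ν : Measure S) [IsProbabilityMeasure ν]
    (hν : ∀ s, ν {s} = ENNReal.ofReal (f s))
    (r : ℕ) (hr : 1 ≤ r)
    (h : Ω → S → ℝ) (l : Ω → ℝ)
    (hhmeas : ∀ s, Measurable fun ω => h ω s) (hlmeas : Measurable l)
    (C : ℝ) (hhb : ∀ ω s, |h ω s| ≤ C) (hlb : ∀ ω, |l ω| ≤ C) :
    variance
        (fun p : Ω × (Fin r → S) =>
          (1 / (r : ℝ)) * ∑ q, h p.1 (p.2 q) / f (p.2 q) + l p.1)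
        (μ.prod (Measure.pi fun _ : Fin r => ν))
      = variance (fun ω => (∑ t, h ω t) + l ω) μ
        + (1 / (r : ℝ)) *
            ∫ ω, ((∑ t, (h ω t) ^ 2 / f t) - (∑ t, h ω t) ^ 2) ∂μ := by
  have hr₀ : r ≠ 0 := by omega
  have hweighted : Measurable fun x : Ω × S ↦ h x.1 x.2 / f x.2 :=
    measurable_from_prod_countable_left fun t ↦ (hhmeas t).div_const (f t)
  have hWmeas : Measurable fun p : Ω × (Fin r → S) ↦
      (1 / (r : ℝ)) * ∑ q, h p.1 (p.2 q) / f (p.2 q) + l p.1 :=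
    .add (.const_mul (Finset.measurable_sum _ fun q _ ↦ hweighted.comp
      (measurable_fst.prodMk ((measurable_pi_apply q).comp measurable_snd))) _)
      (hlmeas.comp measurable_fst)
  have hweighted_le (ω : Ω) (t : S) : |h ω t / f t| ≤ ∑ t', C / f t' := by
    rw [abs_div, abs_of_pos (hf t)]
    exact (div_le_div_of_nonneg_right (hhb ω t) (hf t).le).trans <|
      Finset.single_le_sum (fun t' _ ↦ div_nonneg ((abs_nonneg _).trans (hhb ω t')) (hf t').le)
        (Finset.mem_univ t)
  have hWle (p : Ω × (Fin r → S)) :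
      ‖(1 / (r : ℝ)) * ∑ q, h p.1 (p.2 q) / f (p.2 q) + l p.1‖ ≤ ∑ t', C / f t' + C :=
    (abs_add_le _ _).trans (add_le_add (abs_sampleMean_le hr₀ fun q ↦ hweighted_le _ _) (hlb _))
  rw [variance_prod_eq_variance_integral_add_integral_variance hWmeas.stronglyMeasurable hWle]
  have hmean (ω : Ω) : ∫ s, (1 / (r : ℝ)) * ∑ q, h ω (s q) / f (s q) + l ω
      ∂Measure.pi (fun _ : Fin r ↦ ν) = ∑ t, h ω t + l ω := by
    rw [integral_add .of_finite (integrable_const _),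
      integral_sampleMean_pi hr₀ (g := fun t ↦ h ω t / f t) .of_finite,
      integral_div_density hf hν, integral_const]
    simp
  have hvar (ω : Ω) : Var[fun s ↦ (1 / (r : ℝ)) * ∑ q, h ω (s q) / f (s q) + l ω;
      Measure.pi (fun _ : Fin r ↦ ν)] = (∑ t, h ω t ^ 2 / f t - (∑ t, h ω t) ^ 2) / r := by
    rw [variance_add_const Integrable.of_finite.aestronglyMeasurable,
      variance_sampleMean_pi (g := fun t ↦ h ω t / f t) .of_discrete,
      variance_div_density hf hν]
  simp_rw [hmean, hvar, integral_div]
  ring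

/-- (Variance of the subsampling-approximated influence function, Theorem S2.)
With `s_1, …, s_r` i.i.d. draws from the distribution `ν` on a finite set `S`
with positive mass function `f`, independent of the data `ω ∼ μ`, the
the importance-sampling approximation
`W(ω,s) = (1/r)∑_q h(ω,s_q)/f(s_q) + l(ω)` satisfies
`Var(W) = Var_μ(ω ↦ ∑_t h(ω,t) + l(ω))
  + (1/r)·∫ (∑_t h(ω,t)²/f(t) − (∑_t h(ω,t))²) dμ`. -/
theorem stmt19 {Ω : Type*} [MeasurableSpace Ω] (μ : Measure Ω) [IsProbabilityMeasure μ]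
    {S : Type*} [Fintype S] [MeasurableSpace S] [MeasurableSingletonClass S]
    (f : S → ℝ) (hf : ∀ s, 0 < f s) (hfsum : ∑ s, f s = 1)
    (ν : Measure S) [IsProbabilityMeasure ν]
    (hν : ∀ s, ν {s} = ENNReal.ofReal (f s))
    (r : ℕ) (hr : 1 ≤ r)
    (h : Ω → S → ℝ) (l : Ω → ℝ)
    (hhmeas : ∀ s, Measurable fun ω => h ω s) (hlmeas : Measurable l)
    (C : ℝ) (hhb : ∀ ω s, |h ω s| ≤ C) (hlb : ∀ ω, |l ω| ≤ C) :
    variance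
        (fun p : Ω × (Fin r → S) =>
          (1 / (r : ℝ)) * ∑ q, h p.1 (p.2 q) / f (p.2 q) + l p.1)
        (μ.prod (Measure.pi fun _ : Fin r => ν))
      = variance (fun ω => (∑ t, h ω t) + l ω) μ
        + (1 / (r : ℝ)) *
            ∫ ω, ((∑ t, (h ω t) ^ 2 / f t) - (∑ t, h ω t) ^ 2) ∂μ :=
  stmt19_general μ f hf ν hν r hr h l hhmeas hlmeas C hhb hlb
end
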